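/- arXiv:2205.12821 — 6 statements merged into one kernel-verified Lean document; each statement's English description precedes it below -/
import Mathlib

section
/- Every 2P_4-free connected finite simple graph G with γ_{t2}(G) ≥ 3 satisfies ct_{γ_{t2}}(G) ≤ 2. -/
open SimpleGraph

/-- `D` is a total dominating set of `G`: every vertex has a neighbour in `D`. -/
def IsTotalDomSet {V : Type*} (G : SimpleGraph V) (D : Set V) : Prop :=
  ∀ v : V, ∃ u ∈ D, G.Adj u v

/-- `x` and `y` are (distinct or not) at distance at most two:
adjacent or joined through a common neighbour. -/
def WithinTwo {V : Type*} (G : SimpleGraph V) (x y : V) : Prop :=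
  G.Adj x y ∨ ∃ z, G.Adj x z ∧ G.Adj z y

/-- `x` and `y` are at distance exactly two. -/
def DistTwo {V : Type*} (G : SimpleGraph V) (x y : V) : Prop :=
  x ≠ y ∧ ¬ G.Adj x y ∧ ∃ z, G.Adj x z ∧ G.Adj z y

/-- `D` is a semitotal dominating set of `G`: a dominating set in which every
vertex of `D` has another vertex of `D` within distance two (a witness). -/
def IsSemitotalDomSet {V : Type*} (G : SimpleGraph V) (D : Set V) : Prop :=
  (∀ v : V, v ∉ D → ∃ u ∈ D, G.Adj u v) ∧
  (∀ x ∈ D, ∃ y ∈ D, y ≠ x ∧ WithinTwo G x y)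

/-- The total domination number `γ_t`. -/
noncomputable def totalDomNum {V : Type*} (G : SimpleGraph V) [Fintype V] : ℕ :=
  sInf {n | ∃ D : Set V, IsTotalDomSet G D ∧ D.ncard = n}

/-- The semitotal domination number `γ_{t2}`. -/
noncomputable def semitotalDomNum {V : Type*} (G : SimpleGraph V) [Fintype V] : ℕ :=
  sInf {n | ∃ D : Set V, IsSemitotalDomSet G D ∧ D.ncard = n}

/-- The graph obtained from `G` by contracting the edge `xy`:
delete `y` and merge it into `x`. -/
def contractEdge {V : Type*} (G : SimpleGraph V) (x y : V) :
    SimpleGraph {v : V // v ≠ y} :=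
  SimpleGraph.fromRel (fun a b =>
    G.Adj a.1 b.1 ∨ (a.1 = x ∧ G.Adj y b.1) ∨ (b.1 = x ∧ G.Adj y a.1))

/-- A bundled finite simple graph. -/
structure FGraph : Type 1 where
  V : Type
  fin : Fintype V
  G : SimpleGraph V

attribute [instance] FGraph.fin

noncomputable def FGraph.tdn (A : FGraph) : ℕ := totalDomNum A.G

noncomputable def FGraph.stdn (A : FGraph) : ℕ := semitotalDomNum A.G

/-- `B` is obtained from `A` by contracting a single edge. -/
def FGraph.Contract (A B : FGraph) : Prop :=
  ∃ x y : A.V, A.G.Adj x y ∧ ∃ e : B.V ≃ {v : A.V // v ≠ y},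
    ∀ a b : B.V, B.G.Adj a b ↔ (contractEdge A.G x y).Adj (e a) (e b)

/-- `B` is obtained from `A` by a sequence of `n` edge contractions. -/
inductive ContractStar : ℕ → FGraph → FGraph → Prop
  | refl (A : FGraph) : ContractStar 0 A A
  | step {n : ℕ} {A B C : FGraph} : A.Contract B → ContractStar n B C →
      ContractStar (n + 1) A C

/-- At most `k` edge contractions suffice to decrease the total domination number by one. -/
def ctTDLe (A : FGraph) (k : ℕ) : Prop :=
  ∃ n ≤ k, ∃ B : FGraph, ContractStar n A B ∧ B.tdn = A.tdn - 1

/-- At most `k` edge contractions suffice to decrease the semitotal domination number by one. -/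
def ctSTLe (A : FGraph) (k : ℕ) : Prop :=
  ∃ n ≤ k, ∃ B : FGraph, ContractStar n A B ∧ B.stdn = A.stdn - 1

/-- `ct_{γ_t}`: the minimum number of edge contractions needed to decrease `γ_t` by one. -/
noncomputable def ctTDNum (A : FGraph) : ℕ :=
  sInf {n | ∃ B : FGraph, ContractStar n A B ∧ B.tdn = A.tdn - 1}

/-- `ct_{γ_{t2}}`: the minimum number of edge contractions needed to decrease `γ_{t2}` by one. -/
noncomputable def ctSTNum (A : FGraph) : ℕ :=
  sInf {n | ∃ B : FGraph, ContractStar n A B ∧ B.stdn = A.stdn - 1}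

/-- Disjoint union of two simple graphs. -/
def disjGraphUnion {α β : Type*} (G : SimpleGraph α) (H : SimpleGraph β) :
    SimpleGraph (α ⊕ β) :=
  SimpleGraph.fromRel (fun a b =>
    match a, b with
    | Sum.inl a, Sum.inl b => G.Adj a b
    | Sum.inr a, Sum.inr b => H.Adj a b
    | _, _ => False)

section Helpers

variable {V : Type*} {G : SimpleGraph V}

lemma withinTwo_symm {a b : V} (h : WithinTwo G a b) : WithinTwo G b a := by
  rcases h with h | ⟨z, h1, h2⟩
  · exact Or.inl h.symm
  · exact Or.inr ⟨z, h2.symm, h1.symm⟩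

lemma adj_withinTwo {a b : V} (h : G.Adj a b) : WithinTwo G a b := Or.inl h

lemma sne {y : V} {a b : V} {ha : a ≠ y} {hb : b ≠ y} (h : a ≠ b) :
    (⟨a, ha⟩ : {v : V // v ≠ y}) ≠ ⟨b, hb⟩ := fun e => h (congrArg Subtype.val e)

lemma contractEdge_adj_iff {x y : V} {a b : {v : V // v ≠ y}} :
    (contractEdge G x y).Adj a b ↔ a ≠ b ∧
      (G.Adj a.1 b.1 ∨ (a.1 = x ∧ G.Adj y b.1) ∨ (b.1 = x ∧ G.Adj y a.1)) := by
  unfold contractEdge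
  rw [SimpleGraph.fromRel_adj]
  constructor
  · rintro ⟨hne, h | h⟩
    · exact ⟨hne, h⟩
    · refine ⟨hne, ?_⟩
      rcases h with h | ⟨h1, h2⟩ | ⟨h1, h2⟩
      · exact Or.inl h.symm
      · exact Or.inr (Or.inr ⟨h1, h2⟩)
      · exact Or.inr (Or.inl ⟨h1, h2⟩)
  · rintro ⟨hne, h⟩
    exact ⟨hne, Or.inl h⟩

lemma cAdj_of_adj {x y : V} {a b : V} (ha : a ≠ y) (hb : b ≠ y) (h : G.Adj a b) :
    (contractEdge G x y).Adj ⟨a, ha⟩ ⟨b, hb⟩ :=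
  contractEdge_adj_iff.2 ⟨sne h.ne, Or.inl h⟩

lemma cAdj_of_y {x y : V} (hxy : G.Adj x y) {b : V} (hb : b ≠ y) (hbx : b ≠ x)
    (h : G.Adj y b) : (contractEdge G x y).Adj ⟨x, hxy.ne⟩ ⟨b, hb⟩ :=
  contractEdge_adj_iff.2 ⟨sne (fun e => hbx e.symm), Or.inr (Or.inl ⟨rfl, h⟩)⟩

lemma withinTwo_contract {x y : V} (hxy : G.Adj x y) {a b : V} (ha : a ≠ y) (hb : b ≠ y)
    (hab : a ≠ b) (h : WithinTwo G a b) :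
    WithinTwo (contractEdge G x y) ⟨a, ha⟩ ⟨b, hb⟩ := by
  rcases h with h | ⟨z, h1, h2⟩
  · exact Or.inl (cAdj_of_adj ha hb h)
  · by_cases hz : z = y
    · subst hz
      by_cases hax : a = x
      · subst hax
        exact Or.inl (cAdj_of_y hxy hb (fun e => hab e.symm) h2)
      · by_cases hbx : b = x
        · subst hbx
          exact Or.inl ((cAdj_of_y hxy ha hax h1.symm).symm)
        · exact Or.inr ⟨⟨x, hxy.ne⟩, (cAdj_of_y hxy ha hax h1.symm).symm,
            cAdj_of_y hxy hb hbx h2⟩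
    · exact Or.inr ⟨⟨z, hz⟩, cAdj_of_adj ha hz h1, cAdj_of_adj hz hb h2⟩

lemma withinTwo_contract_tox {x y : V} (hxy : G.Adj x y) {a : V} (ha : a ≠ y) (hax : a ≠ x)
    (h : WithinTwo G a x ∨ WithinTwo G a y) :
    WithinTwo (contractEdge G x y) ⟨a, ha⟩ ⟨x, hxy.ne⟩ := by
  rcases h with h | h
  · rcases h with h | ⟨z, h1, h2⟩
    · exact Or.inl (cAdj_of_adj ha hxy.ne h)
    · by_cases hz : z = y
      · subst hz
        exact Or.inl ((cAdj_of_y hxy ha hax h1.symm).symm)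
      · exact Or.inr ⟨⟨z, hz⟩, cAdj_of_adj ha hz h1, cAdj_of_adj hz hxy.ne h2⟩
  · rcases h with h | ⟨z, h1, h2⟩
    · exact Or.inl ((cAdj_of_y hxy ha hax h.symm).symm)
    · by_cases hz : z = x
      · subst hz
        exact Or.inl (cAdj_of_adj ha hxy.ne h1)
      · exact Or.inr ⟨⟨z, h2.ne⟩, cAdj_of_adj ha h2.ne h1,
          (cAdj_of_y hxy h2.ne hz h2.symm).symm⟩

lemma image_semitotal {x y : V} (hxy : G.Adj x y) {D : Set V}
    (hD : IsSemitotalDomSet G D) (hyD : y ∉ D) :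
    IsSemitotalDomSet (contractEdge G x y) {w : {v : V // v ≠ y} | w.1 ∈ D} := by
  constructor
  · rintro ⟨v, hv⟩ hvD
    obtain ⟨u, huD, hu⟩ := hD.1 v hvD
    exact ⟨⟨u, fun e => hyD (e ▸ huD)⟩, huD, cAdj_of_adj _ hv hu⟩
  · rintro ⟨v, hv⟩ hvD
    obtain ⟨w, hwD, hwne, hw⟩ := hD.2 v hvD
    exact ⟨⟨w, fun e => hyD (e ▸ hwD)⟩, hwD, sne hwne,
      withinTwo_contract hxy hv _ (fun e => hwne e.symm) hw⟩

lemma ncard_subtype {y : V} (S : Set V) (hS : ∀ v ∈ S, v ≠ y) :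
    ({w : {v : V // v ≠ y} | w.1 ∈ S}).ncard = S.ncard := by
  have himg : S = Subtype.val '' {w : {v : V // v ≠ y} | w.1 ∈ S} := by
    ext v
    constructor
    · intro hv
      exact ⟨⟨v, hS v hv⟩, hv, rfl⟩
    · rintro ⟨w, hw, rfl⟩
      exact hw
  rw [Eq.comm] at himg
  calc ({w : {v : V // v ≠ y} | w.1 ∈ S}).ncard
      = (Subtype.val '' {w : {v : V // v ≠ y} | w.1 ∈ S}).ncard :=
        (Set.ncard_image_of_injective _ Subtype.val_injective).symm
    _ = S.ncard := by rw [himg]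

end Helpers
section Lift

def stdnSet (B : FGraph) : Set ℕ :=
  {n | ∃ D : Set B.V, IsSemitotalDomSet B.G D ∧ D.ncard = n}

lemma stdn_eq_sInf (B : FGraph) : B.stdn = sInf (stdnSet B) := rfl

lemma stdn_le {B : FGraph} {n : ℕ} (h : n ∈ stdnSet B) : B.stdn ≤ n := Nat.sInf_le h

lemma lift_le {A B : FGraph} (h : A.Contract B) {m : ℕ} (hm : m ∈ stdnSet B) :
    A.stdn ≤ B.stdn + 1 := by
  classical
  obtain ⟨x, y, hxy, e, he⟩ := h
  obtain ⟨DB, hDB, hcard⟩ := Nat.sInf_mem (⟨m, hm⟩ : (stdnSet B).Nonempty)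
  set f : B.V → A.V := fun v => (e v).1 with hf
  have hfinj : Function.Injective f := fun a b hab => e.injective (Subtype.val_injective hab)
  have hfy : ∀ v, f v ≠ y := fun v => (e v).2
  have hadj : ∀ a b : B.V, B.G.Adj a b ↔ ((e a) ≠ (e b) ∧
      (A.G.Adj (f a) (f b) ∨ (f a = x ∧ A.G.Adj y (f b)) ∨ (f b = x ∧ A.G.Adj y (f a)))) :=
    fun a b => (he a b).trans contractEdge_adj_iff
  have hsymmf : ∀ (v : A.V) (hv : v ≠ y), f (e.symm ⟨v, hv⟩) = v := by
    intro v hv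
    show (e (e.symm ⟨v, hv⟩)).1 = v
    rw [Equiv.apply_symm_apply]
  have himgcard : (f '' DB).ncard = B.stdn := by
    rw [Set.ncard_image_of_injective _ hfinj, hcard, stdn_eq_sInf]
  by_cases hx : ∃ u ∈ DB, f u = x
  · -- x is in the image: add y
    have hyimg : y ∉ f '' DB := by
      rintro ⟨u, _, hu⟩; exact hfy u hu
    have hxmem : x ∈ f '' DB := by
      obtain ⟨u, hu1, hu2⟩ := hx; exact ⟨u, hu1, hu2⟩
    refine le_trans (stdn_le (B := A) ⟨f '' DB ∪ {y}, ⟨?_, ?_⟩, rfl⟩) ?_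
    · -- domination
      intro v hv
      have hvy : v ≠ y := fun h => hv (by simp [h])
      have hvim : e.symm ⟨v, hvy⟩ ∉ DB := by
        intro hmem
        exact hv (Or.inl ⟨_, hmem, hsymmf v hvy⟩)
      obtain ⟨u, huD, hu⟩ := hDB.1 _ hvim
      rw [hadj] at hu
      rw [hsymmf v hvy] at hu
      rcases hu.2 with h1 | ⟨h1, h2⟩ | ⟨h1, h2⟩
      · exact ⟨f u, Or.inl ⟨u, huD, rfl⟩, h1⟩
      · exact ⟨y, Or.inr rfl, h2⟩
      · exact absurd (Or.inl (h1 ▸ hxmem)) hv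
    · -- witnesses
      intro a ha
      rcases ha with ⟨u, huD, rfl⟩ | ha
      · -- a = f u
        by_cases hux : f u = x
        · exact ⟨y, Or.inr rfl, fun hh => hfy u (hh.symm), Or.inl (hux ▸ hxy)⟩
        · obtain ⟨w, hwD, hwne, hw⟩ := hDB.2 u huD
          rcases hw with hw | ⟨z, hz1, hz2⟩
          · rw [hadj] at hw
            rcases hw.2 with h1 | ⟨h1, h2⟩ | ⟨h1, h2⟩
            · exact ⟨f w, Or.inl ⟨w, hwD, rfl⟩, fun hh => hwne (hfinj hh), Or.inl h1⟩
            · exact absurd h1 hux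
            · exact ⟨y, Or.inr rfl, (hfy u).symm ∘ Eq.symm ∘ Eq.symm, Or.inl h2.symm⟩
          · rw [hadj] at hz1 hz2
            rcases hz1.2 with g1 | ⟨g1, g2⟩ | ⟨g1, g2⟩
            · rcases hz2.2 with k1 | ⟨k1, k2⟩ | ⟨k1, k2⟩
              · exact ⟨f w, Or.inl ⟨w, hwD, rfl⟩, fun hh => hwne (hfinj hh),
                  Or.inr ⟨f z, g1, k1⟩⟩
              · -- f z = x, Adj y (f w) : f u ~ x ~ y
                exact ⟨y, Or.inr rfl, (Ne.symm (hfy u)), Or.inr ⟨f z, g1, k1 ▸ hxy⟩⟩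
              · -- f w = x, Adj y (f z): f u ~ f z ~ y
                exact ⟨y, Or.inr rfl, (Ne.symm (hfy u)), Or.inr ⟨f z, g1, k2.symm⟩⟩
            · exact absurd g1 hux
            · -- f z = x ∧ Adj y (f u) : u ~ y
              exact ⟨y, Or.inr rfl, (Ne.symm (hfy u)), Or.inl g2.symm⟩
      · -- a = y
        have hay : a = y := ha
        subst hay
        exact ⟨x, Or.inl hxmem, hxy.ne, Or.inl hxy.symm⟩
    · calc (f '' DB ∪ {y}).ncard ≤ (f '' DB).ncard + ({y} : Set A.V).ncard :=
            Set.ncard_union_le _ _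
        _ = B.stdn + 1 := by rw [himgcard, Set.ncard_singleton]
  · -- x not in the image: add x
    push_neg at hx
    have hxim : ∀ u ∈ DB, f u ≠ x := hx
    refine le_trans (stdn_le (B := A) ⟨f '' DB ∪ {x}, ⟨?_, ?_⟩, rfl⟩) ?_
    · intro v hv
      have hvx : v ≠ x := fun h => hv (by simp [h])
      by_cases hvy : v = y
      · exact ⟨x, Or.inr rfl, hvy ▸ hxy⟩
      · have hvim : e.symm ⟨v, hvy⟩ ∉ DB := by
          intro hmem
          exact hv (Or.inl ⟨_, hmem, hsymmf v hvy⟩)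
        obtain ⟨u, huD, hu⟩ := hDB.1 _ hvim
        rw [hadj] at hu
        rw [hsymmf v hvy] at hu
        rcases hu.2 with h1 | ⟨h1, h2⟩ | ⟨h1, h2⟩
        · exact ⟨f u, Or.inl ⟨u, huD, rfl⟩, h1⟩
        · exact absurd h1 (hxim u huD)
        · exact absurd h1 hvx
    · intro a ha
      rcases ha with ⟨u, huD, rfl⟩ | ha
      · obtain ⟨w, hwD, hwne, hw⟩ := hDB.2 u huD
        rcases hw with hw | ⟨z, hz1, hz2⟩
        · rw [hadj] at hw
          rcases hw.2 with h1 | ⟨h1, h2⟩ | ⟨h1, h2⟩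
          · exact ⟨f w, Or.inl ⟨w, hwD, rfl⟩, fun hh => hwne (hfinj hh), Or.inl h1⟩
          · exact absurd h1 (hxim u huD)
          · exact absurd h1 (hxim w hwD)
        · rw [hadj] at hz1 hz2
          rcases hz1.2 with g1 | ⟨g1, g2⟩ | ⟨g1, g2⟩
          · rcases hz2.2 with k1 | ⟨k1, k2⟩ | ⟨k1, k2⟩
            · exact ⟨f w, Or.inl ⟨w, hwD, rfl⟩, fun hh => hwne (hfinj hh),
                Or.inr ⟨f z, g1, k1⟩⟩
            · -- f z = x: f u ~ x
              exact ⟨x, Or.inr rfl, fun hh => hxim u huD hh.symm, Or.inl (k1 ▸ g1)⟩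
            · exact absurd k1 (hxim w hwD)
          · exact absurd g1 (hxim u huD)
          · -- f z = x ∧ Adj y (f u): f u ~ y ~ x
            exact ⟨x, Or.inr rfl, fun hh => hxim u huD hh.symm,
              Or.inr ⟨y, g2.symm, hxy.symm⟩⟩
      · have hax : x = a := Eq.symm ha
        subst hax
        -- a = x : find a witness for x
        have hxnotim : e.symm ⟨x, hxy.ne⟩ ∉ DB := by
          intro hmem
          exact hxim _ hmem (hsymmf x hxy.ne)
        obtain ⟨u, huD, hu⟩ := hDB.1 _ hxnotim
        rw [hadj] at hu
        rw [hsymmf x hxy.ne] at hu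
        have hune : f u ≠ x := hxim u huD
        rcases hu.2 with h1 | ⟨h1, h2⟩ | ⟨h1, h2⟩
        · exact ⟨f u, Or.inl ⟨u, huD, rfl⟩, hune, Or.inl h1.symm⟩
        · exact absurd h1 hune
        · exact ⟨f u, Or.inl ⟨u, huD, rfl⟩, hune, Or.inr ⟨y, hxy, h2⟩⟩
    · calc (f '' DB ∪ {x}).ncard ≤ (f '' DB).ncard + ({x} : Set A.V).ncard :=
            Set.ncard_union_le _ _
        _ = B.stdn + 1 := by rw [himgcard, Set.ncard_singleton]

lemma contractstar_one {A B : FGraph} (h : A.Contract B) : ContractStar 1 A B :=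
  ContractStar.step h (ContractStar.refl B)

lemma contractstar_two {A B C : FGraph} (h1 : A.Contract B) (h2 : B.Contract C) :
    ContractStar 2 A C :=
  ContractStar.step h1 (ContractStar.step h2 (ContractStar.refl C))

lemma assemble1 {A B1 : FGraph} (h1 : A.Contract B1) (hk : 1 ≤ A.stdn)
    (hB1 : A.stdn - 1 ∈ stdnSet B1) : ctSTLe A 2 := by
  have h1le := stdn_le hB1
  have hge := lift_le h1 hB1
  exact ⟨1, by norm_num, B1, contractstar_one h1, by omega⟩

lemma assemble2 {A B1 B2 : FGraph} (h1 : A.Contract B1) (h2 : B1.Contract B2)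
    (hk : 1 ≤ A.stdn) (hB1 : A.stdn ∈ stdnSet B1) (hB2 : A.stdn - 1 ∈ stdnSet B2) :
    ctSTLe A 2 := by
  have hb2le : B2.stdn ≤ A.stdn - 1 := stdn_le hB2
  have hb1le : B1.stdn ≤ B2.stdn + 1 := lift_le h2 hB2
  have hb1ge : A.stdn ≤ B1.stdn + 1 := lift_le h1 hB1
  by_cases hcase : B1.stdn = A.stdn - 1
  · exact ⟨1, by norm_num, B1, contractstar_one h1, hcase⟩
  · exact ⟨2, le_refl 2, B2, contractstar_two h1 h2, by omega⟩

noncomputable def cg (A : FGraph) (y : A.V) (x : A.V) : FGraph :=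
  ⟨{v : A.V // v ≠ y}, by classical exact Subtype.fintype _, contractEdge A.G x y⟩

lemma cg_contract (A : FGraph) {x y : A.V} (h : A.G.Adj x y) : A.Contract (cg A y x) :=
  ⟨x, y, h, Equiv.refl _, fun _ _ => Iff.rfl⟩

end Lift
section Configs

lemma configC1 {A : FGraph} (D : Set A.V) (hD : IsSemitotalDomSet A.G D)
    (hcard : D.ncard = A.stdn) (hk : 1 ≤ A.stdn) {u v w : A.V} (huv : A.G.Adj u v)
    (hu : u ∈ D) (hv : v ∈ D) (hw : w ∈ D) (hwu : w ≠ u) (hwv : w ≠ v)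
    (h2 : WithinTwo A.G w u ∨ WithinTwo A.G w v) : ctSTLe A 2 := by
  classical
  apply assemble1 (cg_contract A huv) hk
  refine ⟨{z : {p : A.V // p ≠ v} | z.1 ∈ D \ {v}}, ⟨?_, ?_⟩, ?_⟩
  · -- domination
    rintro ⟨a, hav⟩ haD
    simp only [Set.mem_setOf_eq, Set.mem_diff, Set.mem_singleton_iff] at haD
    have haD' : a ∉ D := fun h => haD ⟨h, hav⟩
    obtain ⟨d, hdD, hd⟩ := hD.1 a haD'
    by_cases hdv : d = v
    · subst hdv
      have hau : a ≠ u := by rintro rfl; exact haD' hu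
      exact ⟨⟨u, huv.ne⟩, ⟨hu, huv.ne⟩, cAdj_of_y huv hav hau hd⟩
    · exact ⟨⟨d, hdv⟩, ⟨hdD, hdv⟩, cAdj_of_adj hdv hav hd⟩
  · -- witnesses
    rintro ⟨a, hav⟩ haD
    simp only [Set.mem_setOf_eq, Set.mem_diff, Set.mem_singleton_iff] at haD
    by_cases hau : a = u
    · subst hau
      exact ⟨⟨w, hwv⟩, ⟨hw, hwv⟩, sne hwu,
        withinTwo_symm (withinTwo_contract_tox huv hwv hwu h2)⟩
    · obtain ⟨ww, hwwD, hwwne, hww⟩ := hD.2 a haD.1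
      by_cases hwwv : ww = v
      · subst hwwv
        exact ⟨⟨u, huv.ne⟩, ⟨hu, huv.ne⟩, sne (fun e => hau e.symm),
          withinTwo_contract_tox huv hav hau (Or.inr hww)⟩
      · by_cases hwwu : ww = u
        · subst hwwu
          exact ⟨⟨ww, huv.ne⟩, ⟨hu, huv.ne⟩, sne (fun e => hau e.symm),
            withinTwo_contract_tox huv hav hau (Or.inl hww)⟩
        · exact ⟨⟨ww, hwwv⟩, ⟨hwwD, hwwv⟩, sne hwwne,
            withinTwo_contract huv hav hwwv (fun e => hwwne e.symm) hww⟩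
  · show ({w : {p : A.V // p ≠ v} | w.1 ∈ D \ {v}}).ncard = A.stdn - 1
    rw [ncard_subtype (D \ {v}) (fun p hp => hp.2), Set.ncard_diff_singleton_of_mem hv,
      hcard]

lemma walk_chain {A : FGraph} (hc : A.G.Connected) (D : Set A.V)
    (hD : IsSemitotalDomSet A.G D) {x y : A.V} (hxy : A.G.Adj x y)
    (hne : ∃ w ∈ D, w ≠ x ∧ w ≠ y)
    (hno : ∀ w ∈ D, w ≠ x → w ≠ y → ¬WithinTwo A.G w x ∧ ¬WithinTwo A.G w y) :
    ∃ q1 q2 w, w ∈ D ∧ w ≠ x ∧ w ≠ y ∧ (A.G.Adj x q1 ∨ A.G.Adj y q1) ∧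
      A.G.Adj q1 q2 ∧ A.G.Adj q2 w ∧ q1 ∉ D ∧ q2 ∉ D ∧ q1 ≠ x ∧ q1 ≠ y ∧
      q2 ≠ x ∧ q2 ≠ y := by
  classical
  obtain ⟨w0, hw0D, hw0x, hw0y⟩ := hne
  have aux : ∀ n (x' : A.V), (x' = x ∨ x' = y) → ∀ w, w ∈ D → w ≠ x → w ≠ y →
      ∀ p : A.G.Walk x' w, p.length ≤ n →
      ∃ q1 q2 w', w' ∈ D ∧ w' ≠ x ∧ w' ≠ y ∧ (A.G.Adj x q1 ∨ A.G.Adj y q1) ∧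
        A.G.Adj q1 q2 ∧ A.G.Adj q2 w' := by
    intro n
    induction n with
    | zero =>
      intro x' hx' w hwD hwx hwy p hp
      have h0 : p.length = 0 := Nat.le_zero.mp hp
      have := p.eq_of_length_eq_zero h0
      rcases hx' with rfl | rfl
      · exact absurd this.symm hwx
      · exact absurd this.symm hwy
    | succ n ih =>
      intro x' hx' w hwD hwx hwy p hp
      cases p with
      | nil =>
        rcases hx' with rfl | rfl
        · exact absurd rfl hwx
        · exact absurd rfl hwy
      | @cons _ v _ h q =>
        by_cases hvxy : v = x ∨ v = y
        · exact ih v hvxy w hwD hwx hwy q (by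
            simp only [SimpleGraph.Walk.length_cons] at hp; omega)
        · push_neg at hvxy
          by_cases hvD : v ∈ D
          · exfalso
            rcases hx' with rfl | rfl
            · exact (hno v hvD hvxy.1 hvxy.2).1 (Or.inl h.symm)
            · exact (hno v hvD hvxy.1 hvxy.2).2 (Or.inl h.symm)
          · cases q with
            | nil => exact absurd hwD hvD
            | @cons _ v2 _ h2 q2 =>
              have hlen : q2.length + 2 ≤ n + 1 := by
                simpa [SimpleGraph.Walk.length_cons] using hp
              by_cases hv2xy : v2 = x ∨ v2 = y
              · exact ih v2 hv2xy w hwD hwx hwy q2 (by omega)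
              · push_neg at hv2xy
                by_cases hv2D : v2 ∈ D
                · exfalso
                  rcases hx' with rfl | rfl
                  · exact (hno v2 hv2D hv2xy.1 hv2xy.2).1
                      (Or.inr ⟨v, h2.symm, h.symm⟩)
                  · exact (hno v2 hv2D hv2xy.1 hv2xy.2).2
                      (Or.inr ⟨v, h2.symm, h.symm⟩)
                · obtain ⟨d, hdD, hd⟩ := hD.1 v2 hv2D
                  by_cases hdxy : d = x ∨ d = y
                  · exact ih d hdxy w hwD hwx hwy (SimpleGraph.Walk.cons hd q2)
                      (by simp only [SimpleGraph.Walk.length_cons]; omega)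
                  · push_neg at hdxy
                    refine ⟨v, v2, d, hdD, hdxy.1, hdxy.2, ?_, h2, hd.symm⟩
                    rcases hx' with rfl | rfl
                    · exact Or.inl h
                    · exact Or.inr h
  obtain ⟨p⟩ := hc.preconnected x w0
  obtain ⟨q1, q2, w, hwD, hwx, hwy, hq1, hq12, hq2w⟩ :=
    aux p.length x (Or.inl rfl) w0 hw0D hw0x hw0y p le_rfl
  have hq2x : q2 ≠ x := by
    rintro rfl; exact (hno w hwD hwx hwy).1 (Or.inl hq2w.symm)
  have hq2y : q2 ≠ y := by
    rintro rfl; exact (hno w hwD hwx hwy).2 (Or.inl hq2w.symm)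
  have hq1x : q1 ≠ x := by
    rintro rfl; exact (hno w hwD hwx hwy).1 (Or.inr ⟨q2, hq2w.symm, hq12.symm⟩)
  have hq1y : q1 ≠ y := by
    rintro rfl; exact (hno w hwD hwx hwy).2 (Or.inr ⟨q2, hq2w.symm, hq12.symm⟩)
  have hq1D : q1 ∉ D := by
    intro hmem
    rcases hq1 with h' | h'
    · exact (hno q1 hmem hq1x hq1y).1 (Or.inl h'.symm)
    · exact (hno q1 hmem hq1x hq1y).2 (Or.inl h'.symm)
  have hq2D : q2 ∉ D := by
    intro hmem
    rcases hq1 with h' | h'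
    · exact (hno q2 hmem hq2x hq2y).1 (Or.inr ⟨q1, hq12.symm, h'.symm⟩)
    · exact (hno q2 hmem hq2x hq2y).2 (Or.inr ⟨q1, hq12.symm, h'.symm⟩)
  exact ⟨q1, q2, w, hwD, hwx, hwy, hq1, hq12, hq2w, hq1D, hq2D, hq1x, hq1y, hq2x, hq2y⟩

lemma configCA3 {A : FGraph} (D : Set A.V) (hD : IsSemitotalDomSet A.G D)
    (hcard : D.ncard = A.stdn) (hk : 1 ≤ A.stdn) {x y q1 q2 w : A.V}
    (hxy : A.G.Adj x y) (hx : x ∈ D) (hy : y ∈ D) (hw : w ∈ D) (hwx : w ≠ x)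
    (hwy : w ≠ y) (hq1 : A.G.Adj x q1 ∨ A.G.Adj y q1) (hq12 : A.G.Adj q1 q2)
    (hq2w : A.G.Adj q2 w) (hq1D : q1 ∉ D) (hq2D : q2 ∉ D) (hq1x : q1 ≠ x)
    (hq1y : q1 ≠ y) (hq2x : q2 ≠ x) (hq2y : q2 ≠ y)
    (hno : ∀ w' ∈ D, w' ≠ x → w' ≠ y → ¬WithinTwo A.G w' x ∧ ¬WithinTwo A.G w' y) :
    ctSTLe A 2 := by
  classical
  set B1 := cg A y x with hB1
  set s : B1.V := ⟨x, hxy.ne⟩ with hs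
  set t : B1.V := ⟨q1, hq1y⟩ with ht
  have hG1 : B1.G.Adj s t := by
    rcases hq1 with h' | h'
    · exact cAdj_of_adj hxy.ne hq1y h'
    · exact cAdj_of_y hxy hq1y hq1x h'
  apply assemble2 (cg_contract A hxy) (cg_contract B1 hG1) hk
  · -- intermediate set of size stdn
    refine ⟨{z : B1.V | z.1 ∈ insert q1 (D \ {y})}, ⟨?_, ?_⟩, ?_⟩
    · rintro ⟨a, hay⟩ haT
      simp only [Set.mem_setOf_eq, Set.mem_insert_iff, Set.mem_diff,
        Set.mem_singleton_iff] at haT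
      push_neg at haT
      have haD : a ∉ D := fun hmem => hay (by by_contra hne; exact haT (Or.inr ⟨hmem, hne⟩))
      obtain ⟨d, hdD, hd⟩ := hD.1 a haD
      by_cases hdy : d = y
      · subst hdy
        have hax : a ≠ x := by rintro rfl; exact haD hx
        exact ⟨s, Or.inr ⟨hx, hxy.ne⟩, cAdj_of_y hxy hay hax hd⟩
      · exact ⟨⟨d, hdy⟩, Or.inr ⟨hdD, hdy⟩, cAdj_of_adj hdy hay hd⟩
    · rintro ⟨a, hay⟩ haT
      simp only [Set.mem_setOf_eq, Set.mem_insert_iff, Set.mem_diff,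
        Set.mem_singleton_iff] at haT
      rcases haT with rfl | ⟨haD, _⟩
      · exact ⟨s, Or.inr ⟨hx, hxy.ne⟩, sne (fun e => hq1x e.symm), Or.inl hG1.symm⟩
      · by_cases hax : a = x
        · subst hax
          exact ⟨t, Or.inl rfl, sne hq1x, Or.inl hG1⟩
        · obtain ⟨ww, hwwD, hwwne, hww⟩ := hD.2 a haD
          have hwwx : ww ≠ x := by
            rintro rfl; exact (hno a haD hax hay).1 hww
          have hwwy : ww ≠ y := by
            rintro rfl; exact (hno a haD hax hay).2 hww
          exact ⟨⟨ww, hwwy⟩, Or.inr ⟨hwwD, hwwy⟩, sne hwwne,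
            withinTwo_contract hxy hay hwwy (fun e => hwwne e.symm) hww⟩
    · show ({z : {v : A.V // v ≠ y} | z.1 ∈ insert q1 (D \ {y})}).ncard = A.stdn
      rw [ncard_subtype (insert q1 (D \ {y}))
        (fun p hp => by
          rcases hp with rfl | hp
          · exact hq1y
          · exact hp.2)]
      rw [Set.ncard_insert_of_notMem (fun hmem => hq1D hmem.1),
        Set.ncard_diff_singleton_of_mem hy, hcard]
      omega
  · -- final set of size stdn - 1
    refine ⟨{z : {p : B1.V // p ≠ t} | z.1.1 ∈ D \ {y}}, ⟨?_, ?_⟩, ?_⟩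
    · rintro ⟨⟨a, hay⟩, hat⟩ haS
      simp only [Set.mem_setOf_eq, Set.mem_diff, Set.mem_singleton_iff] at haS
      have haD : a ∉ D := fun hmem => haS ⟨hmem, hay⟩
      obtain ⟨d, hdD, hd⟩ := hD.1 a haD
      by_cases hdy : d = y
      · subst hdy
        have hax : a ≠ x := by rintro rfl; exact haD hx
        refine ⟨⟨s, sne hq1x.symm⟩, ⟨hx, hxy.ne⟩, ?_⟩
        exact cAdj_of_adj (sne hq1x.symm) hat (cAdj_of_y hxy hay hax hd)
      · have hdq1 : d ≠ q1 := by rintro rfl; exact hq1D hdD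
        exact ⟨⟨⟨d, hdy⟩, sne hdq1⟩, ⟨hdD, hdy⟩,
          cAdj_of_adj (sne hdq1) hat (cAdj_of_adj hdy hay hd)⟩
    · rintro ⟨⟨a, hay⟩, hat⟩ haS
      simp only [Set.mem_setOf_eq, Set.mem_diff, Set.mem_singleton_iff] at haS
      by_cases hax : a = x
      · -- merged vertex: witness w via q2
        have hwq1 : w ≠ q1 := by rintro rfl; exact hq1D hw
        have hq2q1 : q2 ≠ q1 := hq12.ne'
        refine ⟨⟨⟨w, hwy⟩, sne hwq1⟩, ⟨hw, hwy⟩, sne (sne (fun e => (hax ▸ hwx) e)), ?_⟩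
        refine Or.inr ⟨⟨⟨q2, hq2y⟩, sne hq2q1⟩, ?_, ?_⟩
        · have h1 : B1.G.Adj t ⟨q2, hq2y⟩ := cAdj_of_adj hq1y hq2y hq12
          have := cAdj_of_y (G := B1.G) (x := s) (y := t) hG1
            (b := ⟨q2, hq2y⟩) (hb := sne hq2q1) (hbx := sne hq2x) h1
          -- this : Adj ⟨s,_⟩ ⟨⟨q2⟩,_⟩ ; our vertex is ⟨⟨a=x⟩,hat⟩
          subst hax
          exact this
        · exact cAdj_of_adj (sne hq2q1) (sne hwq1) (cAdj_of_adj hq2y hwy hq2w)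
      · obtain ⟨ww, hwwD, hwwne, hww⟩ := hD.2 a haS.1
        have hwwx : ww ≠ x := by
          rintro rfl; exact (hno a haS.1 hax hay).1 hww
        have hwwy : ww ≠ y := by
          rintro rfl; exact (hno a haS.1 hax hay).2 hww
        have hwwq1 : ww ≠ q1 := by rintro rfl; exact hq1D hwwD
        have haq1 : a ≠ q1 := by rintro rfl; exact hq1D haS.1
        refine ⟨⟨⟨ww, hwwy⟩, sne hwwq1⟩, ⟨hwwD, hwwy⟩, sne (sne hwwne), ?_⟩
        exact withinTwo_contract hG1 (sne haq1) (sne hwwq1)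
          (sne (fun e => hwwne e.symm))
          (withinTwo_contract hxy hay hwwy (fun e => hwwne e.symm) hww)
    · show ({z : {p : {v : A.V // v ≠ y} // p ≠ t} |
          z.1 ∈ {p : {v : A.V // v ≠ y} | p.1 ∈ D \ {y}}}).ncard = A.stdn - 1
      rw [ncard_subtype (V := {v : A.V // v ≠ y}) (y := t) {p : {v : A.V // v ≠ y} | p.1 ∈ D \ {y}}
        (fun p hp => by
          rintro rfl
          exact hq1D hp.1),
        ncard_subtype (D \ {y}) (fun p hp => hp.2),
        Set.ncard_diff_singleton_of_mem hy, hcard]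

lemma adjCase {A : FGraph} (hc : A.G.Connected) (h3 : 3 ≤ A.stdn) (D : Set A.V)
    (hD : IsSemitotalDomSet A.G D) (hcard : D.ncard = A.stdn) {u v : A.V}
    (hu : u ∈ D) (hv : v ∈ D) (huv : A.G.Adj u v) : ctSTLe A 2 := by
  classical
  have hk : 1 ≤ A.stdn := by omega
  by_cases hW : ∃ w ∈ D, w ≠ u ∧ w ≠ v ∧ (WithinTwo A.G w u ∨ WithinTwo A.G w v)
  · obtain ⟨w, hw, hwu, hwv, h2⟩ := hW
    exact configC1 D hD hcard hk huv hu hv hw hwu hwv h2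
  · push_neg at hW
    have hne : ∃ w ∈ D, w ≠ u ∧ w ≠ v := by
      by_contra hcon
      push_neg at hcon
      have hsub : D ⊆ {u, v} := by
        intro z hz
        by_cases hzu : z = u
        · exact Or.inl hzu
        · exact Or.inr (hcon z hz hzu)
      have : D.ncard ≤ 2 := le_trans (Set.ncard_le_ncard hsub (Set.toFinite _))
        (le_trans (Set.ncard_insert_le _ _) (by simp))
      omega
    have hno : ∀ w ∈ D, w ≠ u → w ≠ v →
        ¬WithinTwo A.G w u ∧ ¬WithinTwo A.G w v := hW
    obtain ⟨q1, q2, w, hwD, hwx, hwy, hq1, hq12, hq2w, hq1D, hq2D, hq1x, hq1y,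
      hq2x, hq2y⟩ := walk_chain hc D hD huv hne hno
    exact configCA3 D hD hcard hk huv hu hv hwD hwx hwy hq1 hq12 hq2w hq1D hq2D
      hq1x hq1y hq2x hq2y hno

end Configs
section ConfigB

lemma configB {A : FGraph} (D : Set A.V) (hD : IsSemitotalDomSet A.G D)
    (hcard : D.ncard = A.stdn) (hk : 1 ≤ A.stdn) {x y m w : A.V}
    (hx : x ∈ D) (hy : y ∈ D) (hxney : x ≠ y) (hxm : A.G.Adj x m) (hmy : A.G.Adj m y)
    (hmD : m ∉ D) (hw : w ∈ D) (hwx : w ≠ x) (hwy : w ≠ y)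
    (h2 : WithinTwo A.G w x ∨ WithinTwo A.G w y ∨ WithinTwo A.G w m) : ctSTLe A 2 := by
  classical
  set B1 := cg A m x with hB1
  set s : B1.V := ⟨x, hxm.ne⟩ with hs
  set t : B1.V := ⟨y, hmy.ne'⟩ with ht
  have hG1 : B1.G.Adj s t := cAdj_of_y hxm hmy.ne' (fun e => hxney e.symm) hmy
  have hwm : w ≠ m := fun e => hmD (e ▸ hw)
  have hym : y ≠ m := hmy.ne'
  apply assemble2 (cg_contract A hxm) (cg_contract B1 hG1) hk
  · -- intermediate: image of D
    refine ⟨{z : B1.V | z.1 ∈ D}, image_semitotal hxm hD hmD, ?_⟩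
    show ({z : {v : A.V // v ≠ m} | z.1 ∈ D}).ncard = A.stdn
    rw [ncard_subtype D (fun p hp e => hmD (by rwa [e] at hp)), hcard]
  · -- final set
    refine ⟨{z : {p : B1.V // p ≠ t} | z.1.1 ∈ D \ {y}}, ⟨?_, ?_⟩, ?_⟩
    · rintro ⟨⟨a, ham⟩, hat⟩ haS
      simp only [Set.mem_setOf_eq, Set.mem_diff, Set.mem_singleton_iff] at haS
      have hay : a ≠ y := fun e => hat (Subtype.ext e)
      have haD : a ∉ D := fun hmem => haS ⟨hmem, hay⟩
      obtain ⟨d, hdD, hd⟩ := hD.1 a haD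
      by_cases hdy : d = y
      · subst hdy
        have hax : a ≠ x := by rintro rfl; exact haD hx
        refine ⟨⟨s, hG1.ne⟩, ⟨hx, hxney⟩, ?_⟩
        exact cAdj_of_y hG1 hat (sne hax) (cAdj_of_adj hym ham hd)
      · have hdm : d ≠ m := fun e => hmD (e ▸ hdD)
        exact ⟨⟨⟨d, hdm⟩, sne hdy⟩, ⟨hdD, hdy⟩,
          cAdj_of_adj (sne hdy) hat (cAdj_of_adj hdm ham hd)⟩
    · rintro ⟨⟨a, ham⟩, hat⟩ haS
      simp only [Set.mem_setOf_eq, Set.mem_diff, Set.mem_singleton_iff] at haS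
      by_cases hax : a = x
      · subst hax
        refine ⟨⟨⟨w, hwm⟩, sne hwy⟩, ⟨hw, hwy⟩, sne (sne hwx), ?_⟩
        refine withinTwo_symm ?_
        rcases h2 with h2 | h2 | h2
        · exact withinTwo_contract_tox hG1 (sne hwy) (sne hwx)
            (Or.inl (withinTwo_contract_tox hxm hwm hwx (Or.inl h2)))
        · exact withinTwo_contract_tox hG1 (sne hwy) (sne hwx)
            (Or.inr (withinTwo_contract hxm hwm hym hwy h2))
        · exact withinTwo_contract_tox hG1 (sne hwy) (sne hwx)
            (Or.inl (withinTwo_contract_tox hxm hwm hwx (Or.inr h2)))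
      · obtain ⟨ww, hwwD, hwwne, hww⟩ := hD.2 a haS.1
        have ham' : a ≠ m := fun e => hmD (e ▸ haS.1)
        by_cases hwwy : ww = y
        · subst hwwy
          refine ⟨⟨s, hG1.ne⟩, ⟨hx, hxney⟩, sne (sne (fun e => hax e.symm)), ?_⟩
          exact withinTwo_contract_tox hG1 hat (sne hax)
            (Or.inr (withinTwo_contract hxm ham' hym haS.2 hww))
        · by_cases hwwx : ww = x
          · subst hwwx
            refine ⟨⟨s, hG1.ne⟩, ⟨hx, hxney⟩, sne (sne (fun e => hax e.symm)), ?_⟩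
            exact withinTwo_contract_tox hG1 hat (sne hax)
              (Or.inl (withinTwo_contract_tox hxm ham' hax (Or.inl hww)))
          · have hwwm : ww ≠ m := fun e => hmD (e ▸ hwwD)
            refine ⟨⟨⟨ww, hwwm⟩, sne hwwy⟩, ⟨hwwD, hwwy⟩, sne (sne hwwne), ?_⟩
            exact withinTwo_contract hG1 hat (sne hwwy) (sne (fun e => hwwne e.symm))
              (withinTwo_contract hxm ham' hwwm (fun e => hwwne e.symm) hww)
    · show ({z : {p : {v : A.V // v ≠ m} // p ≠ t} |
          z.1 ∈ {p : {v : A.V // v ≠ m} | p.1 ∈ D \ {y}}}).ncard = A.stdn - 1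
      rw [ncard_subtype (V := {v : A.V // v ≠ m}) (y := t)
        {p : {v : A.V // v ≠ m} | p.1 ∈ D \ {y}}
        (fun p hp => by
          rintro rfl
          exact hp.2 rfl),
        ncard_subtype (V := A.V) (y := m) (D \ {y})
          (fun p hp e => hmD (by rw [e] at hp; exact hp.1)),
        Set.ncard_diff_singleton_of_mem hy, hcard]

end ConfigB
section Force

lemma disj_inl_adj {α β : Type*} {G : SimpleGraph α} {H : SimpleGraph β} {i j : α} :
    (disjGraphUnion G H).Adj (Sum.inl i) (Sum.inl j) ↔ G.Adj i j := by
  unfold disjGraphUnion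
  rw [SimpleGraph.fromRel_adj]
  constructor
  · rintro ⟨hne, h | h⟩
    · exact h
    · exact h.symm
  · intro h
    exact ⟨by simpa using h.ne, Or.inl h⟩

lemma disj_inr_adj {α β : Type*} {G : SimpleGraph α} {H : SimpleGraph β} {i j : β} :
    (disjGraphUnion G H).Adj (Sum.inr i) (Sum.inr j) ↔ H.Adj i j := by
  unfold disjGraphUnion
  rw [SimpleGraph.fromRel_adj]
  constructor
  · rintro ⟨hne, h | h⟩
    · exact h
    · exact h.symm
  · intro h
    exact ⟨by simpa using h.ne, Or.inl h⟩

lemma disj_inl_inr {α β : Type*} {G : SimpleGraph α} {H : SimpleGraph β} {i : α} {j : β} :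
    ¬ (disjGraphUnion G H).Adj (Sum.inl i) (Sum.inr j) := by
  unfold disjGraphUnion
  rw [SimpleGraph.fromRel_adj]
  rintro ⟨hne, h | h⟩ <;> exact h

lemma embed2P4 {V : Type} {G : SimpleGraph V} (a b : Fin 4 → V)
    (hadj : ∀ i j : Fin 4, G.Adj (a i) (a j) ↔ (SimpleGraph.pathGraph 4).Adj i j)
    (hbdj : ∀ i j : Fin 4, G.Adj (b i) (b j) ↔ (SimpleGraph.pathGraph 4).Adj i j)
    (hcross : ∀ i j, ¬ G.Adj (a i) (b j))
    (hane : ∀ i j : Fin 4, i ≠ j → a i ≠ a j)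
    (hbne : ∀ i j : Fin 4, i ≠ j → b i ≠ b j)
    (hab : ∀ i j, a i ≠ b j) :
    Nonempty (disjGraphUnion (SimpleGraph.pathGraph 4) (SimpleGraph.pathGraph 4) ↪g G) := by
  refine ⟨⟨⟨Sum.elim a b, ?_⟩, ?_⟩⟩
  · rintro (i | i) (j | j) h
    · simp only [Sum.elim_inl] at h
      by_cases hij : i = j
      · exact congrArg Sum.inl hij
      · exact absurd h (hane i j hij)
    · exact absurd h (hab i j)
    · exact absurd h.symm (hab j i)
    · simp only [Sum.elim_inr] at h
      by_cases hij : i = j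
      · exact congrArg Sum.inr hij
      · exact absurd h (hbne i j hij)
  · intro u v
    rcases u with i | i <;> rcases v with j | j
    · exact (hadj i j).trans disj_inl_adj.symm
    · exact iff_of_false (hcross i j) disj_inl_inr
    · exact iff_of_false (fun h => hcross j i h.symm)
        (fun h => disj_inl_inr h.symm)
    · exact (hbdj i j).trans disj_inr_adj.symm

lemma force2P4 {V : Type} {G : SimpleGraph V}
    (hfree : ¬ Nonempty (disjGraphUnion (SimpleGraph.pathGraph 4) (SimpleGraph.pathGraph 4) ↪g G))
    {p1 p2 p3 p4 q1 q2 q3 q4 : V}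
    (e12 : G.Adj p1 p2) (e23 : G.Adj p2 p3) (e34 : G.Adj p3 p4)
    (f12 : G.Adj q1 q2) (f23 : G.Adj q2 q3) (f34 : G.Adj q3 q4)
    (n13 : ¬G.Adj p1 p3) (n14 : ¬G.Adj p1 p4) (n24 : ¬G.Adj p2 p4)
    (m13 : ¬G.Adj q1 q3) (m14 : ¬G.Adj q1 q4) (m24 : ¬G.Adj q2 q4)
    (c11 : ¬G.Adj p1 q1)
    (c12 : ¬G.Adj p1 q2)
    (c13 : ¬G.Adj p1 q3)
    (c14 : ¬G.Adj p1 q4)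
    (c21 : ¬G.Adj p2 q1)
    (c22 : ¬G.Adj p2 q2)
    (c23 : ¬G.Adj p2 q3)
    (c24 : ¬G.Adj p2 q4)
    (c31 : ¬G.Adj p3 q1)
    (c32 : ¬G.Adj p3 q2)
    (c33 : ¬G.Adj p3 q3)
    (c34 : ¬G.Adj p3 q4)
    (c41 : ¬G.Adj p4 q1)
    (c42 : ¬G.Adj p4 q2)
    (c43 : ¬G.Adj p4 q3)
    (c44 : ¬G.Adj p4 q4) : False := by
  have e21 := e12.symm
  have e32 := e23.symm
  have e43 := e34.symm
  have f21 := f12.symm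
  have f32 := f23.symm
  have f43 := f34.symm
  have n31 : ¬G.Adj p3 p1 := fun h => n13 h.symm
  have n41 : ¬G.Adj p4 p1 := fun h => n14 h.symm
  have n42 : ¬G.Adj p4 p2 := fun h => n24 h.symm
  have m31 : ¬G.Adj q3 q1 := fun h => m13 h.symm
  have m41 : ¬G.Adj q4 q1 := fun h => m14 h.symm
  have m42 : ¬G.Adj q4 q2 := fun h => m24 h.symm
  have dp12 : p1 ≠ p2 := e12.ne
  have dp23 : p2 ≠ p3 := e23.ne
  have dp34 : p3 ≠ p4 := e34.ne
  have dp13 : p1 ≠ p3 := by intro h; exact n14 (by rw [← h] at e34; exact e34)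
  have dp14 : p1 ≠ p4 := by intro h; exact n13 (by rw [← h] at e34; exact e34.symm)
  have dp24 : p2 ≠ p4 := by intro h; exact n14 (by rw [← h]; exact e12)
  have dq12 : q1 ≠ q2 := f12.ne
  have dq23 : q2 ≠ q3 := f23.ne
  have dq34 : q3 ≠ q4 := f34.ne
  have dq13 : q1 ≠ q3 := by intro h; exact m14 (by rw [← h] at f34; exact f34)
  have dq14 : q1 ≠ q4 := by intro h; exact m13 (by rw [← h] at f34; exact f34.symm)
  have dq24 : q2 ≠ q4 := by intro h; exact m14 (by rw [← h]; exact f12)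
  have dp21 : p2 ≠ p1 := fun h => dp12 h.symm
  have dq21 : q2 ≠ q1 := fun h => dq12 h.symm
  have dp32 : p3 ≠ p2 := fun h => dp23 h.symm
  have dq32 : q3 ≠ q2 := fun h => dq23 h.symm
  have dp43 : p4 ≠ p3 := fun h => dp34 h.symm
  have dq43 : q4 ≠ q3 := fun h => dq34 h.symm
  have dp31 : p3 ≠ p1 := fun h => dp13 h.symm
  have dq31 : q3 ≠ q1 := fun h => dq13 h.symm
  have dp41 : p4 ≠ p1 := fun h => dp14 h.symm
  have dq41 : q4 ≠ q1 := fun h => dq14 h.symm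
  have dp42 : p4 ≠ p2 := fun h => dp24 h.symm
  have dq42 : q4 ≠ q2 := fun h => dq24 h.symm
  have dc11 : p1 ≠ q1 := by intro h; exact c12 (by rw [h]; exact f12)
  have dc12 : p1 ≠ q2 := by intro h; exact c11 (by rw [h]; exact f21)
  have dc13 : p1 ≠ q3 := by intro h; exact c14 (by rw [h]; exact f34)
  have dc14 : p1 ≠ q4 := by intro h; exact c13 (by rw [h]; exact f43)
  have dc21 : p2 ≠ q1 := by intro h; exact c22 (by rw [h]; exact f12)
  have dc22 : p2 ≠ q2 := by intro h; exact c21 (by rw [h]; exact f21)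
  have dc23 : p2 ≠ q3 := by intro h; exact c24 (by rw [h]; exact f34)
  have dc24 : p2 ≠ q4 := by intro h; exact c23 (by rw [h]; exact f43)
  have dc31 : p3 ≠ q1 := by intro h; exact c32 (by rw [h]; exact f12)
  have dc32 : p3 ≠ q2 := by intro h; exact c31 (by rw [h]; exact f21)
  have dc33 : p3 ≠ q3 := by intro h; exact c34 (by rw [h]; exact f34)
  have dc34 : p3 ≠ q4 := by intro h; exact c33 (by rw [h]; exact f43)
  have dc41 : p4 ≠ q1 := by intro h; exact c42 (by rw [h]; exact f12)
  have dc42 : p4 ≠ q2 := by intro h; exact c41 (by rw [h]; exact f21)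
  have dc43 : p4 ≠ q3 := by intro h; exact c44 (by rw [h]; exact f34)
  have dc44 : p4 ≠ q4 := by intro h; exact c43 (by rw [h]; exact f43)
  apply hfree
  apply embed2P4 ![p1,p2,p3,p4] ![q1,q2,q3,q4]
  · intro i j
    fin_cases i <;> fin_cases j <;>
      (simp [SimpleGraph.pathGraph_adj, e12, e23, e34, e21, e32, e43, n13, n14, n24, n31, n41, n42] <;> decide)
  · intro i j
    fin_cases i <;> fin_cases j <;>
      (simp [SimpleGraph.pathGraph_adj, f12, f23, f34, f21, f32, f43, m13, m14, m24, m31, m41, m42] <;> decide)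
  · intro i j
    fin_cases i <;> fin_cases j <;> first | exact c11 | exact c12 | exact c13 | exact c14 | exact c21 | exact c22 | exact c23 | exact c24 | exact c31 | exact c32 | exact c33 | exact c34 | exact c41 | exact c42 | exact c43 | exact c44 
  · intro i j hij
    fin_cases i <;> fin_cases j <;> first | exact absurd rfl hij | exact dp12 | exact dp21 | exact dp13 | exact dp31 | exact dp14 | exact dp41 | exact dp23 | exact dp32 | exact dp24 | exact dp42 | exact dp34 | exact dp43 
  · intro i j hij
    fin_cases i <;> fin_cases j <;> first | exact absurd rfl hij | exact dq12 | exact dq21 | exact dq13 | exact dq31 | exact dq14 | exact dq41 | exact dq23 | exact dq32 | exact dq24 | exact dq42 | exact dq34 | exact dq43 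
  · intro i j
    fin_cases i <;> fin_cases j <;> first | exact dc11 | exact dc12 | exact dc13 | exact dc14 | exact dc21 | exact dc22 | exact dc23 | exact dc24 | exact dc31 | exact dc32 | exact dc33 | exact dc34 | exact dc41 | exact dc42 | exact dc43 | exact dc44 

end Force
section ConfigC3

lemma configC3 {A : FGraph} (D : Set A.V) (hD : IsSemitotalDomSet A.G D)
    (hcard : D.ncard = A.stdn) (hk : 1 ≤ A.stdn) {x1 y1 m1 x2 y2 m2 b a' : A.V}
    (hx1D : x1 ∈ D) (hy1D : y1 ∈ D) (hx2D : x2 ∈ D) (hy2D : y2 ∈ D)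
    (hx1m1 : A.G.Adj x1 m1) (hm1y1 : A.G.Adj m1 y1) (hx2m2 : A.G.Adj x2 m2)
    (hm2y2 : A.G.Adj m2 y2) (hy1b : A.G.Adj y1 b) (hba' : A.G.Adj b a')
    (hx2a' : A.G.Adj x2 a') (hm2D : m2 ∉ D) (hbD : b ∉ D)
    (hx1y1 : x1 ≠ y1) (hx2y2 : x2 ≠ y2) (hy1y2 : y1 ≠ y2) (hx1y2 : x1 ≠ y2)
    (hy1x2 : y1 ≠ x2) (hy1m2 : y1 ≠ m2) (hbm2 : b ≠ m2) (ha'm2 : a' ≠ m2)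
    (hm1m2 : m1 ≠ m2) (hx1m2 : x1 ≠ m2) (ha'b : a' ≠ b) (hm1b : m1 ≠ b)
    (hx1b : x1 ≠ b) (hx2b : x2 ≠ b) (ha'y1 : a' ≠ y1)
    (hF1 : ∀ v, A.G.Adj y2 v → ¬A.G.Adj m2 v →
      (∀ d ∈ D, d ≠ y2 → ¬A.G.Adj d v) → A.G.Adj b v)
    (hnoc : ∀ u ∈ D, u ≠ x2 → u ≠ y2 → ¬WithinTwo A.G u y2) : ctSTLe A 2 := by
  classical
  set B1 := cg A m2 x2 with hB1
  set s : B1.V := ⟨y1, hy1m2⟩ with hs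
  set t : B1.V := ⟨b, hbm2⟩ with ht
  have hG1 : B1.G.Adj s t := cAdj_of_adj hy1m2 hbm2 hy1b
  apply assemble2 (cg_contract A hx2m2) (cg_contract B1 hG1) hk
  · -- intermediate: image of D
    refine ⟨{z : B1.V | z.1 ∈ D}, image_semitotal hx2m2 hD hm2D, ?_⟩
    show ({z : {v : A.V // v ≠ m2} | z.1 ∈ D}).ncard = A.stdn
    rw [ncard_subtype D (fun p hp e => hm2D (by rwa [e] at hp)), hcard]
  · -- final set
    refine ⟨{z : {p : B1.V // p ≠ t} | z.1.1 ∈ D \ {y2}}, ⟨?_, ?_⟩, ?_⟩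
    · -- domination
      rintro ⟨⟨a, ham2⟩, hat⟩ haS
      simp only [Set.mem_setOf_eq, Set.mem_diff, Set.mem_singleton_iff] at haS
      by_cases hay2 : a = y2
      · subst hay2
        refine ⟨⟨⟨x2, hx2m2.ne⟩, sne hx2b⟩, ⟨hx2D, hx2y2⟩, ?_⟩
        exact cAdj_of_adj (sne hx2b) hat
          (cAdj_of_y hx2m2 ham2 (fun e => hx2y2 e.symm) hm2y2)
      · have haD : a ∉ D := fun hmem => haS ⟨hmem, hay2⟩
        by_cases hdom : ∃ d ∈ D, d ≠ y2 ∧ A.G.Adj d a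
        · obtain ⟨d, hdD, hdy2, hd⟩ := hdom
          have hdm2 : d ≠ m2 := fun e => hm2D (by rwa [e] at hdD)
          have hdb : d ≠ b := fun e => hbD (by rwa [e] at hdD)
          exact ⟨⟨⟨d, hdm2⟩, sne hdb⟩, ⟨hdD, hdy2⟩,
            cAdj_of_adj (sne hdb) hat (cAdj_of_adj hdm2 ham2 hd)⟩
        · push_neg at hdom
          obtain ⟨d0, hd0D, hd0⟩ := hD.1 a haD
          have hd0y2 : d0 = y2 := by
            by_contra hne
            exact hdom d0 hd0D hne hd0
          subst hd0y2
          by_cases hm2a : A.G.Adj m2 a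
          · refine ⟨⟨⟨x2, hx2m2.ne⟩, sne hx2b⟩, ⟨hx2D, hx2y2⟩, ?_⟩
            exact cAdj_of_adj (sne hx2b) hat
              (cAdj_of_y hx2m2 ham2 (fun e => haD (e ▸ hx2D)) hm2a)
          · have hba : A.G.Adj b a :=
              hF1 a hd0 hm2a (fun d hdD hdy2 => hdom d hdD hdy2)
            refine ⟨⟨s, hG1.ne⟩, ⟨hy1D, hy1y2⟩, ?_⟩
            exact cAdj_of_y hG1 hat (sne (fun e => haD (e ▸ hy1D)))
              (cAdj_of_adj hbm2 ham2 hba)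
    · -- witnesses
      rintro ⟨⟨a, ham2⟩, hat⟩ haS
      simp only [Set.mem_setOf_eq, Set.mem_diff, Set.mem_singleton_iff] at haS
      by_cases hax2 : a = x2
      · subst hax2
        refine ⟨⟨s, hG1.ne⟩, ⟨hy1D, hy1y2⟩, sne (sne hy1x2), ?_⟩
        refine Or.inr ⟨⟨⟨a', ha'm2⟩, sne ha'b⟩, ?_, ?_⟩
        · exact cAdj_of_adj (sne hx2b) (sne ha'b)
            (cAdj_of_adj hx2m2.ne ha'm2 hx2a')
        · exact (cAdj_of_y hG1 (sne ha'b) (sne ha'y1)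
            (cAdj_of_adj hbm2 ha'm2 hba')).symm
      · by_cases hay1 : a = y1
        · subst hay1
          refine ⟨⟨⟨x1, hx1m2⟩, sne hx1b⟩, ⟨hx1D, hx1y2⟩,
            sne (sne hx1y1), ?_⟩
          refine Or.inr ⟨⟨⟨m1, hm1m2⟩, sne hm1b⟩, ?_, ?_⟩
          · exact cAdj_of_adj hG1.ne (sne hm1b)
              (cAdj_of_adj hy1m2 hm1m2 hm1y1.symm)
          · exact cAdj_of_adj (sne hm1b) (sne hx1b)
              (cAdj_of_adj hm1m2 hx1m2 hx1m1.symm)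
        · by_cases hax1 : a = x1
          · subst hax1
            refine ⟨⟨s, hG1.ne⟩, ⟨hy1D, hy1y2⟩, sne (sne (fun e => hx1y1 e.symm)), ?_⟩
            refine Or.inr ⟨⟨⟨m1, hm1m2⟩, sne hm1b⟩, ?_, ?_⟩
            · exact cAdj_of_adj hat (sne hm1b)
                (cAdj_of_adj ham2 hm1m2 hx1m1)
            · exact cAdj_of_adj (sne hm1b) hG1.ne
                (cAdj_of_adj hm1m2 hy1m2 hm1y1)
          · obtain ⟨ww, hwwD, hwwne, hww⟩ := hD.2 a haS.1
            have hwwy2 : ww ≠ y2 := by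
              rintro rfl
              exact hnoc a haS.1 hax2 haS.2 hww
            have hwwm2 : ww ≠ m2 := fun e => hm2D (by rwa [e] at hwwD)
            have hwwb : ww ≠ b := fun e => hbD (by rwa [e] at hwwD)
            refine ⟨⟨⟨ww, hwwm2⟩, sne hwwb⟩, ⟨hwwD, hwwy2⟩, sne (sne hwwne), ?_⟩
            exact withinTwo_contract hG1 hat (sne hwwb) (sne (fun e => hwwne e.symm))
              (withinTwo_contract hx2m2 ham2 hwwm2 (fun e => hwwne e.symm) hww)
    · show ({z : {p : {v : A.V // v ≠ m2} // p ≠ t} |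
          z.1 ∈ {p : {v : A.V // v ≠ m2} | p.1 ∈ D \ {y2}}}).ncard = A.stdn - 1
      rw [ncard_subtype (V := {v : A.V // v ≠ m2}) (y := t)
        {p : {v : A.V // v ≠ m2} | p.1 ∈ D \ {y2}}
        (fun p hp => by
          rintro rfl
          exact hbD hp.1),
        ncard_subtype (V := A.V) (y := m2) (D \ {y2})
          (fun p hp e => hm2D (by rw [e] at hp; exact hp.1)),
        Set.ncard_diff_singleton_of_mem hy2D, hcard]

end ConfigC3
/-- Every `2P₄`-free connected graph with `γ_{t2} ≥ 3` satisfies `ct_{γ_{t2}} ≤ 2`. -/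
theorem stmt6 (A : FGraph)
    (hfree : ¬ Nonempty
      (disjGraphUnion (SimpleGraph.pathGraph 4) (SimpleGraph.pathGraph 4) ↪g A.G))
    (hc : A.G.Connected) (h3 : 3 ≤ A.stdn) :
    ctSTLe A 2 := by
  classical
  have hk1 : 1 ≤ A.stdn := by omega
  have hne : (stdnSet A).Nonempty := by
    by_contra hcon
    rw [Set.not_nonempty_iff_eq_empty] at hcon
    have h0 : A.stdn = 0 := by rw [stdn_eq_sInf, hcon]; exact Nat.sInf_empty
    omega
  obtain ⟨D, hD, hcard'⟩ := Nat.sInf_mem hne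
  have hcard : D.ncard = A.stdn := by rw [hcard', stdn_eq_sInf]
  -- Case 1: D contains an adjacent pair.
  by_cases hADJ : ∃ u ∈ D, ∃ v ∈ D, A.G.Adj u v
  · obtain ⟨u, hu, v, hv, huv⟩ := hADJ
    exact adjCase hc h3 D hD hcard hu hv huv
  push_neg at hADJ
  -- hADJ : ∀ u ∈ D, ∀ v ∈ D, ¬ Adj u v
  -- Case 2: some within-two pair in D has a third D-vertex nearby.
  by_cases hA2 : ∃ u ∈ D, ∃ v ∈ D, u ≠ v ∧ WithinTwo A.G u v ∧ ∃ w ∈ D, w ≠ u ∧ w ≠ v ∧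
      (WithinTwo A.G w u ∨ WithinTwo A.G w v ∨
        ∃ m, A.G.Adj u m ∧ A.G.Adj m v ∧ WithinTwo A.G w m)
  · obtain ⟨u, hu, v, hv, huvne, hW2, w, hw, hwu, hwv, hcase⟩ := hA2
    have hnadj : ¬A.G.Adj u v := hADJ u hu v hv
    obtain ⟨m0, hum0, hm0v⟩ : ∃ m, A.G.Adj u m ∧ A.G.Adj m v := by
      rcases hW2 with h | ⟨z, h1, h2⟩
      · exact absurd h hnadj
      · exact ⟨z, h1, h2⟩
    have hm0D : m0 ∉ D := fun hmem => hADJ u hu m0 hmem hum0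
    rcases hcase with h | h | ⟨m, hum, hmv, h⟩
    · exact configB D hD hcard hk1 hu hv huvne hum0 hm0v hm0D hw hwu hwv (Or.inl h)
    · exact configB D hD hcard hk1 hu hv huvne hum0 hm0v hm0D hw hwu hwv
        (Or.inr (Or.inl h))
    · have hmD : m ∉ D := fun hmem => hADJ u hu m hmem hum
      exact configB D hD hcard hk1 hu hv huvne hum hmv hmD hw hwu hwv
        (Or.inr (Or.inr h))
  · -- Case 3: the hard case.
    have hA2' : ∀ u ∈ D, ∀ v ∈ D, u ≠ v → WithinTwo A.G u v → ∀ w ∈ D, w ≠ u → w ≠ v →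
        ¬WithinTwo A.G w u ∧ ¬WithinTwo A.G w v ∧
          ∀ m, A.G.Adj u m → A.G.Adj m v → ¬WithinTwo A.G w m := by
      intro u hu v hv hne' hW w hw hwu hwv
      exact ⟨fun h => hA2 ⟨u, hu, v, hv, hne', hW, w, hw, hwu, hwv, Or.inl h⟩,
        fun h => hA2 ⟨u, hu, v, hv, hne', hW, w, hw, hwu, hwv, Or.inr (Or.inl h)⟩,
        fun m h1 h2 h =>
          hA2 ⟨u, hu, v, hv, hne', hW, w, hw, hwu, hwv, Or.inr (Or.inr ⟨m, h1, h2, h⟩)⟩⟩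
    -- pair 1
    have hDne : D.Nonempty := by
      apply Set.nonempty_of_ncard_ne_zero
      omega
    obtain ⟨x1, hx1D⟩ := hDne
    obtain ⟨y1, hy1D, hy1ne, hWxy1⟩ := hD.2 x1 hx1D
    have hx1y1 : x1 ≠ y1 := hy1ne.symm
    have hnadj1 : ¬A.G.Adj x1 y1 := hADJ x1 hx1D y1 hy1D
    obtain ⟨m1, hx1m1, hm1y1⟩ : ∃ m, A.G.Adj x1 m ∧ A.G.Adj m y1 := by
      rcases hWxy1 with h | ⟨z, h1, h2⟩
      · exact absurd h hnadj1
      · exact ⟨z, h1, h2⟩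
    have hm1D : m1 ∉ D := fun hmem => hADJ x1 hx1D m1 hmem hx1m1
    -- swap 1
    by_cases hsw1 : IsSemitotalDomSet A.G (insert m1 (D \ {y1}))
    · have hcard1 : (insert m1 (D \ {y1})).ncard = A.stdn := by
        rw [Set.ncard_insert_of_notMem (fun hmem => hm1D hmem.1),
          Set.ncard_diff_singleton_of_mem hy1D, hcard]
        omega
      exact adjCase hc h3 _ hsw1 hcard1
        (Set.mem_insert_iff.2 (Or.inr ⟨hx1D, hx1y1⟩)) (Set.mem_insert _ _) hx1m1
    · -- extract b
      have hwit1 : ∀ a ∈ insert m1 (D \ {y1}), ∃ w' ∈ insert m1 (D \ {y1}),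
          w' ≠ a ∧ WithinTwo A.G a w' := by
        intro a ha
        rcases Set.mem_insert_iff.1 ha with rfl | ⟨haD, hay1⟩
        · exact ⟨x1, Set.mem_insert_iff.2 (Or.inr ⟨hx1D, hx1y1⟩),
            fun e => hm1D (e ▸ hx1D), Or.inl hx1m1.symm⟩
        · by_cases hax1 : a = x1
          · subst hax1
            exact ⟨m1, Set.mem_insert _ _, fun e => hm1D (e ▸ hx1D), Or.inl hx1m1⟩
          · obtain ⟨ww, hwwD, hwwne, hww⟩ := hD.2 a haD
            have hwwy1 : ww ≠ y1 := fun e =>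
              hA2 ⟨x1, hx1D, y1, hy1D, hx1y1, hWxy1, a, haD, hax1, hay1,
                Or.inr (Or.inl (by rw [← e]; exact hww))⟩
            exact ⟨ww, Set.mem_insert_iff.2 (Or.inr ⟨hwwD, hwwy1⟩), hwwne,
              withinTwo_symm (withinTwo_symm hww)⟩
      have hdomfail : ¬(∀ v, v ∉ insert m1 (D \ {y1}) →
          ∃ u ∈ insert m1 (D \ {y1}), A.G.Adj u v) :=
        fun hdom => hsw1 ⟨hdom, hwit1⟩
      push_neg at hdomfail
      obtain ⟨b, hbD1, hbnone⟩ := hdomfail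
      have hbney1 : b ≠ y1 := by
        rintro rfl
        exact hbnone m1 (Set.mem_insert _ _) hm1y1
      have hbD : b ∉ D := by
        intro hmem
        exact hbD1 (Set.mem_insert_iff.2 (Or.inr ⟨hmem, hbney1⟩))
      have hy1b : A.G.Adj y1 b := by
        obtain ⟨d, hdD, hd⟩ := hD.1 b hbD
        by_cases hdy1 : d = y1
        · exact hdy1 ▸ hd
        · exact absurd hd (hbnone d (Set.mem_insert_iff.2 (Or.inr ⟨hdD, hdy1⟩)))
      have hbDfacts : ∀ d ∈ D, d ≠ y1 → ¬A.G.Adj d b :=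
        fun d hd hne' hadj => hbnone d (Set.mem_insert_iff.2 (Or.inr ⟨hd, hne'⟩)) hadj
      have nbm1 : ¬A.G.Adj b m1 := fun h => hbnone m1 (Set.mem_insert _ _) h.symm
      -- pair 2
      have hD3 : ∃ w ∈ D, w ≠ x1 ∧ w ≠ y1 := by
        by_contra hcon
        push_neg at hcon
        have hsub : D ⊆ {x1, y1} := by
          intro z hz
          by_cases hzx : z = x1
          · exact Or.inl hzx
          · exact Or.inr (hcon z hz hzx)
        have : D.ncard ≤ 2 := le_trans (Set.ncard_le_ncard hsub (Set.toFinite _))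
          (le_trans (Set.ncard_insert_le _ _) (by simp))
        omega
      obtain ⟨x2, hx2D, hx2x1, hx2y1⟩ := hD3
      obtain ⟨y2, hy2D, hy2ne, hWxy2⟩ := hD.2 x2 hx2D
      have hx2y2 : x2 ≠ y2 := hy2ne.symm
      have hy2x1 : y2 ≠ x1 := fun e =>
        hA2 ⟨x1, hx1D, y1, hy1D, hx1y1, hWxy1, x2, hx2D, hx2x1, hx2y1,
          Or.inl (by rw [← e]; exact hWxy2)⟩
      have hy2y1 : y2 ≠ y1 := fun e =>
        hA2 ⟨x1, hx1D, y1, hy1D, hx1y1, hWxy1, x2, hx2D, hx2x1, hx2y1,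
          Or.inr (Or.inl (by rw [← e]; exact hWxy2))⟩
      have hnadj2 : ¬A.G.Adj x2 y2 := hADJ x2 hx2D y2 hy2D
      obtain ⟨m2, hx2m2, hm2y2⟩ : ∃ m, A.G.Adj x2 m ∧ A.G.Adj m y2 := by
        rcases hWxy2 with h | ⟨z, h1, h2⟩
        · exact absurd h hnadj2
        · exact ⟨z, h1, h2⟩
      have hm2D : m2 ∉ D := fun hmem => hADJ x2 hx2D m2 hmem hx2m2
      -- named instances of hA2'
      have P_x2 := hA2' x1 hx1D y1 hy1D hx1y1 hWxy1 x2 hx2D hx2x1 hx2y1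
      have P_y2 := hA2' x1 hx1D y1 hy1D hx1y1 hWxy1 y2 hy2D hy2x1 hy2y1
      have Q_x1 := hA2' x2 hx2D y2 hy2D hx2y2 hWxy2 x1 hx1D hx2x1.symm hy2x1.symm
      have Q_y1 := hA2' x2 hx2D y2 hy2D hx2y2 hWxy2 y1 hy1D hx2y1.symm hy2y1.symm
      -- swap 2
      by_cases hsw2 : IsSemitotalDomSet A.G (insert m2 (D \ {x2}))
      · have hcard2 : (insert m2 (D \ {x2})).ncard = A.stdn := by
          rw [Set.ncard_insert_of_notMem (fun hmem => hm2D hmem.1),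
            Set.ncard_diff_singleton_of_mem hx2D, hcard]
          omega
        exact adjCase hc h3 _ hsw2 hcard2 (Set.mem_insert _ _)
          (Set.mem_insert_iff.2 (Or.inr ⟨hy2D, hy2ne⟩)) hm2y2
      · -- extract a'
        have hwit2 : ∀ a ∈ insert m2 (D \ {x2}), ∃ w' ∈ insert m2 (D \ {x2}),
            w' ≠ a ∧ WithinTwo A.G a w' := by
          intro a ha
          rcases Set.mem_insert_iff.1 ha with rfl | ⟨haD, hax2⟩
          · exact ⟨y2, Set.mem_insert_iff.2 (Or.inr ⟨hy2D, hy2ne⟩),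
              fun e => hm2D (e ▸ hy2D), Or.inl hm2y2⟩
          · by_cases hay2 : a = y2
            · subst hay2
              exact ⟨m2, Set.mem_insert _ _, fun e => hm2D (e ▸ hy2D),
                Or.inl hm2y2.symm⟩
            · obtain ⟨ww, hwwD, hwwne, hww⟩ := hD.2 a haD
              have hwwx2 : ww ≠ x2 := fun e =>
                hA2 ⟨x2, hx2D, y2, hy2D, hx2y2, hWxy2, a, haD, hax2, hay2,
                  Or.inl (by rw [← e]; exact hww)⟩
              exact ⟨ww, Set.mem_insert_iff.2 (Or.inr ⟨hwwD, hwwx2⟩), hwwne, hww⟩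
        have hdomfail2 : ¬(∀ v, v ∉ insert m2 (D \ {x2}) →
            ∃ u ∈ insert m2 (D \ {x2}), A.G.Adj u v) :=
          fun hdom => hsw2 ⟨hdom, hwit2⟩
        push_neg at hdomfail2
        obtain ⟨a', ha'D2, ha'none⟩ := hdomfail2
        have ha'nex2 : a' ≠ x2 := by
          rintro rfl
          exact ha'none m2 (Set.mem_insert _ _) hx2m2.symm
        have ha'D : a' ∉ D := by
          intro hmem
          exact ha'D2 (Set.mem_insert_iff.2 (Or.inr ⟨hmem, ha'nex2⟩))
        have hx2a' : A.G.Adj x2 a' := by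
          obtain ⟨d, hdD, hd⟩ := hD.1 a' ha'D
          by_cases hdx2 : d = x2
          · exact hdx2 ▸ hd
          · exact absurd hd (ha'none d (Set.mem_insert_iff.2 (Or.inr ⟨hdD, hdx2⟩)))
        have ha'facts : ∀ d ∈ D, d ≠ x2 → ¬A.G.Adj d a' :=
          fun d hd hne' hadj => ha'none d (Set.mem_insert_iff.2 (Or.inr ⟨hd, hne'⟩)) hadj
        have na'm2 : ¬A.G.Adj m2 a' := fun h => ha'none m2 (Set.mem_insert _ _) h
        -- non-adjacency facts
        have nbx1 : ¬A.G.Adj b x1 := fun h => hbDfacts x1 hx1D hx1y1 h.symm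
        have ny1x1 : ¬A.G.Adj y1 x1 := fun h => hnadj1 h.symm
        have na'y2 : ¬A.G.Adj a' y2 := fun h => ha'facts y2 hy2D hy2ne h.symm
        have nbx2 : ¬A.G.Adj b x2 := fun h => hbDfacts x2 hx2D hx2y1 h.symm
        have nbm2 : ¬A.G.Adj b m2 := fun h =>
          Q_y1.2.2 m2 hx2m2 hm2y2 (Or.inr ⟨b, hy1b, h⟩)
        have nby2 : ¬A.G.Adj b y2 := fun h => hbDfacts y2 hy2D hy2y1 h.symm
        have ny1a' : ¬A.G.Adj y1 a' := fun h => ha'facts y1 hy1D hx2y1.symm h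
        have ny1x2 : ¬A.G.Adj y1 x2 := fun h => Q_y1.1 (Or.inl h)
        have ny1m2 : ¬A.G.Adj y1 m2 := fun h => Q_y1.2.2 m2 hx2m2 hm2y2 (Or.inl h)
        have ny1y2 : ¬A.G.Adj y1 y2 := fun h => Q_y1.2.1 (Or.inl h)
        have nm1a' : ¬A.G.Adj m1 a' := fun h =>
          P_x2.2.2 m1 hx1m1 hm1y1 (Or.inr ⟨a', hx2a', h.symm⟩)
        have nm1x2 : ¬A.G.Adj m1 x2 := fun h =>
          P_x2.2.2 m1 hx1m1 hm1y1 (Or.inl h.symm)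
        have nm1m2 : ¬A.G.Adj m1 m2 := fun h =>
          P_y2.2.2 m1 hx1m1 hm1y1 (Or.inr ⟨m2, hm2y2.symm, h.symm⟩)
        have nm1y2 : ¬A.G.Adj m1 y2 := fun h =>
          P_y2.2.2 m1 hx1m1 hm1y1 (Or.inl h.symm)
        have nx1a' : ¬A.G.Adj x1 a' := fun h => Q_x1.1 (Or.inr ⟨a', h, hx2a'.symm⟩)
        have nx1x2 : ¬A.G.Adj x1 x2 := fun h => Q_x1.1 (Or.inl h)
        have nx1m2 : ¬A.G.Adj x1 m2 := fun h => Q_x1.2.2 m2 hx2m2 hm2y2 (Or.inl h)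
        have nx1y2 : ¬A.G.Adj x1 y2 := fun h => Q_x1.2.1 (Or.inl h)
        -- forcing (F2): Adj b a'
        have hba' : A.G.Adj b a' := by
          by_contra hcon
          exact force2P4 hfree hy1b.symm hm1y1.symm hx1m1.symm hx2a'.symm hx2m2 hm2y2
            (fun h => nbm1 h) nbx1 ny1x1
            (fun h => na'm2 h.symm) na'y2 hnadj2
            hcon nbx2 nbm2 nby2
            ny1a' ny1x2 ny1m2 ny1y2
            nm1a' nm1x2 nm1m2 nm1y2
            nx1a' nx1x2 nx1m2 nx1y2
        -- forcing (F1)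
        have hF1 : ∀ v, A.G.Adj y2 v → ¬A.G.Adj m2 v →
            (∀ d ∈ D, d ≠ y2 → ¬A.G.Adj d v) → A.G.Adj b v := by
          intro v hv1 hv2 hv3
          by_contra hcon
          have c21 : ¬A.G.Adj y1 v := fun h => Q_y1.2.1 (Or.inr ⟨v, h, hv1.symm⟩)
          have c31 : ¬A.G.Adj m1 v := fun h =>
            P_y2.2.2 m1 hx1m1 hm1y1 (Or.inr ⟨v, hv1, h.symm⟩)
          have c41 : ¬A.G.Adj x1 v := fun h => Q_x1.2.1 (Or.inr ⟨v, h, hv1.symm⟩)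
          exact force2P4 hfree hy1b.symm hm1y1.symm hx1m1.symm hv1.symm hm2y2.symm
            hx2m2.symm
            (fun h => nbm1 h) nbx1 ny1x1
            (fun h => hv2 h.symm) (fun h => hv3 x2 hx2D hx2y2 h.symm)
            (fun h => hnadj2 h.symm)
            hcon nby2 nbm2 nbx2
            c21 ny1y2 ny1m2 ny1x2
            c31 nm1y2 nm1m2 nm1x2
            c41 nx1y2 nx1m2 nx1x2
        -- remaining distinctness facts
        have hy1m2 : y1 ≠ m2 := fun e => ny1y2 (by rw [e]; exact hm2y2)
        have hbm2 : b ≠ m2 := fun e => nbx2 (by rw [e]; exact hx2m2.symm)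
        have ha'm2 : a' ≠ m2 := fun e => na'y2 (by rw [e]; exact hm2y2)
        have hm1m2 : m1 ≠ m2 := fun e => nm1y2 (by rw [e]; exact hm2y2)
        have hx1m2 : x1 ≠ m2 := fun e => nx1y2 (by rw [e]; exact hm2y2)
        have ha'b : a' ≠ b := by
          intro e
          rw [e] at hx2a'
          exact nbx2 hx2a'.symm
        have hm1b : m1 ≠ b := by
          intro e
          rw [e] at hx1m1
          exact nbx1 hx1m1.symm
        have hx1b : x1 ≠ b := by
          intro e
          rw [← e] at hy1b
          exact ny1x1 hy1b
        have hx2b : x2 ≠ b := by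
          intro e
          rw [← e] at hy1b
          exact ny1x2 hy1b
        have ha'y1 : a' ≠ y1 := by
          intro e
          rw [e] at hx2a'
          exact ny1x2 hx2a'.symm
        have hnoc : ∀ u ∈ D, u ≠ x2 → u ≠ y2 → ¬WithinTwo A.G u y2 :=
          fun u hu h1 h2 => (hA2' x2 hx2D y2 hy2D hx2y2 hWxy2 u hu h1 h2).2.1
        exact configC3 D hD hcard hk1 hx1D hy1D hx2D hy2D hx1m1 hm1y1 hx2m2 hm2y2
          hy1b hba' hx2a' hm2D hbD hx1y1 hx2y2 hy2y1.symm hy2x1.symm hx2y1.symm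
          hy1m2 hbm2 ha'm2 hm1m2 hx1m2 ha'b hm1b hx1b hx2b ha'y1 hF1 hnoc
end

section
/- Let G be a finite simple graph, let uv ∈ E(G), and let H be obtained from G by subdividing the edge uv exactly four times, with new path u, e_1, e_2, e_3, e_4, v. Then from any total dominating set D' of H one can construct a total dominating set D of G with |D| ≤ |D'| − 2. In particular, γ_t(G) ≤ γ_t(H) − 2. -/
open SimpleGraph

/-- The graph obtained from `G` by subdividing the edge `uv` exactly four times:
`uv` is replaced by the path `u, e₀, e₁, e₂, e₃, v`. -/
def subdivide4 {V : Type*} (G : SimpleGraph V) (u v : V) :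
    SimpleGraph (V ⊕ Fin 4) :=
  SimpleGraph.fromRel (fun a b =>
    match a, b with
    | Sum.inl a, Sum.inl b => G.Adj a b ∧ ¬((a = u ∧ b = v) ∨ (a = v ∧ b = u))
    | Sum.inl a, Sum.inr i => (a = u ∧ i = 0) ∨ (a = v ∧ i = 3)
    | Sum.inr i, Sum.inr j => (i : ℕ) + 1 = (j : ℕ)
    | _, _ => False)

/-!
Let `D'` be a total dominating set of the subdivision and `D₀` its trace on `V`. Dominating `e₁`
and `e₂` forces `D'` to meet both pairs `{e₀, e₂}` and `{e₁, e₃}`, so `|D'| ≥ |D₀| + 2`. Adding `v`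
to `D₀` when `e₀ ∈ D'`, and `u` when `e₃ ∈ D'`, gives a total dominating set of `G`. An added
`v ∉ D₀` is paid for by the pair `{e₀, e₂}`: `e₃` must then be dominated by `e₂`, so `D'` contains
both `e₀` and `e₂`. Symmetrically for `u`.
-/

open Set Sum

lemma Set.ncard_preimage_inl_add_ncard_preimage_inr {α β : Type*} [Finite α] [Finite β]
    (s : Set (α ⊕ β)) : (inl ⁻¹' s).ncard + (inr ⁻¹' s).ncard = s.ncard := by
  conv_rhs => rw [← image_preimage_inl_union_image_preimage_inr s]
  rw [ncard_union_eq disjoint_image_inl_image_inr, ncard_image_of_injective _ inl_injective,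
    ncard_image_of_injective _ inr_injective]

lemma Set.ncard_union_le_ncard_add_ncard_sdiff_add_ncard_sdiff {α : Type*} (s t r : Set α) :
    (s ∪ (t ∪ r)).ncard ≤ s.ncard + (t \ s).ncard + (r \ s).ncard := by
  rw [← union_sdiff_self, union_sdiff_distrib]
  exact (ncard_union_le _ _).trans (by grind [ncard_union_le])

/-- One end of the path in the count above: `x` is the end vertex, `{i, j}` the pair paying
for it. -/
lemma Set.ncard_sdiff_lt_ncard_inter {α β : Type*} [Finite β] {X D₀ : Set α} {B P : Set β}
    {x : α} {i j : β} (hX : ∀ y ∈ X, y = x ∧ i ∈ B) (hi : i ∈ P) (hj : j ∈ P) (hij : i ≠ j)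
    (hB : i ∈ B ∨ j ∈ B) (hx : x ∈ D₀ ∨ j ∈ B) : (X \ D₀).ncard < (B ∩ P).ncard := by
  by_cases hadd : i ∈ B ∧ x ∉ D₀
  · have hjB : j ∈ B := hx.resolve_left hadd.2
    calc (X \ D₀).ncard ≤ ({x} : Set α).ncard := ncard_le_ncard fun y hy ↦ (hX y hy.1).1
      _ < ({i, j} : Set β).ncard := by rw [ncard_singleton, ncard_pair hij]; norm_num
      _ ≤ (B ∩ P).ncard := ncard_le_ncard (by grind)
  · have hempty : X \ D₀ = ∅ := by
      refine eq_empty_of_forall_notMem fun y hy ↦ hadd ?_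
      obtain ⟨rfl, hiB⟩ := hX y hy.1
      exact ⟨hiB, hy.2⟩
    rw [hempty, ncard_empty, ncard_pos]
    exact hB.elim (⟨i, ·, hi⟩) (⟨j, ·, hj⟩)

section Subdivide4

variable {V : Type*} {G : SimpleGraph V} {u v : V}

@[simp] lemma subdivide4_adj_inl_inl {a b : V} :
    (subdivide4 G u v).Adj (inl a) (inl b) ↔ G.Adj a b ∧ ¬(a = u ∧ b = v ∨ a = v ∧ b = u) := by
  simp only [subdivide4, SimpleGraph.fromRel_adj, ne_eq, inl.injEq]
  constructor
  · rintro ⟨-, h | ⟨hba, h⟩⟩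
    · exact h
    · exact ⟨hba.symm, by tauto⟩
  · rintro ⟨hab, h⟩
    exact ⟨hab.ne, Or.inl ⟨hab, h⟩⟩

@[simp] lemma subdivide4_adj_inl_inr {a : V} {i : Fin 4} :
    (subdivide4 G u v).Adj (inl a) (inr i) ↔ a = u ∧ i = 0 ∨ a = v ∧ i = 3 := by
  simp [subdivide4]

@[simp] lemma subdivide4_adj_inr_inl {a : V} {i : Fin 4} :
    (subdivide4 G u v).Adj (inr i) (inl a) ↔ a = u ∧ i = 0 ∨ a = v ∧ i = 3 := by
  rw [SimpleGraph.adj_comm, subdivide4_adj_inl_inr]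

@[simp] lemma subdivide4_adj_inr_inr {i j : Fin 4} :
    (subdivide4 G u v).Adj (inr i) (inr j) ↔ (i : ℕ) + 1 = j ∨ (j : ℕ) + 1 = i := by
  simp only [subdivide4, SimpleGraph.fromRel_adj, ne_eq, inr.injEq, and_iff_right_iff_imp]
  omega

lemma IsTotalDomSet.subdivide4_path_mem {D' : Set (V ⊕ Fin 4)}
    (hD' : IsTotalDomSet (subdivide4 G u v) D') :
    (inr 0 ∈ D' ∨ inr 2 ∈ D') ∧ (inr 3 ∈ D' ∨ inr 1 ∈ D') ∧
      (inl u ∈ D' ∨ inr 1 ∈ D') ∧ (inl v ∈ D' ∨ inr 2 ∈ D') := by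
  refine ⟨?_, ?_, ?_, ?_⟩
  · obtain ⟨_ | j, hx, hadj⟩ := hD' (inr 1) <;> [simp at hadj; fin_cases j <;> simp_all]
  · obtain ⟨_ | j, hx, hadj⟩ := hD' (inr 2) <;> [simp at hadj; fin_cases j <;> simp_all]
  · obtain ⟨_ | j, hx, hadj⟩ := hD' (inr 0) <;> [simp_all; fin_cases j <;> simp_all]
  · obtain ⟨_ | j, hx, hadj⟩ := hD' (inr 3) <;> [simp_all; fin_cases j <;> simp_all]

lemma IsTotalDomSet.subdivide4_univ {D : Set V} (hD : IsTotalDomSet G D) :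
    IsTotalDomSet (subdivide4 G u v) univ := by
  rintro (w | i)
  · obtain ⟨b, -, hbw⟩ := hD w
    by_cases h : b = u ∧ w = v ∨ b = v ∧ w = u
    · rcases h with ⟨rfl, rfl⟩ | ⟨rfl, rfl⟩
      · exact ⟨inr 3, trivial, by simp⟩
      · exact ⟨inr 0, trivial, by simp⟩
    · exact ⟨inl b, trivial, by simp [hbw, h]⟩
  · fin_cases i
    exacts [⟨inr 1, trivial, by simp⟩, ⟨inr 0, trivial, by simp⟩, ⟨inr 1, trivial, by simp⟩,
      ⟨inr 2, trivial, by simp⟩]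

/-- A vertex `u` dominated only by `e₀` in the subdivision is dominated by `v` in `G`; hence `e₀`
is traded for `v`, and `e₃` for `u`. -/
def subdivide4Collapse (u v : V) (D' : Set (V ⊕ Fin 4)) : Set V :=
  inl ⁻¹' D' ∪ ({y | y = v ∧ inr 0 ∈ D'} ∪ {y | y = u ∧ inr 3 ∈ D'})

lemma isTotalDomSet_subdivide4Collapse {D' : Set (V ⊕ Fin 4)} (huv : G.Adj u v)
    (hD' : IsTotalDomSet (subdivide4 G u v) D') :
    IsTotalDomSet G (subdivide4Collapse u v D') := by
  intro w
  obtain ⟨b | i, hx, hadj⟩ := hD' (inl w)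
  · exact ⟨b, Or.inl hx, (subdivide4_adj_inl_inl.mp hadj).1⟩
  · rcases subdivide4_adj_inr_inl.mp hadj with ⟨rfl, rfl⟩ | ⟨rfl, rfl⟩
    · exact ⟨v, Or.inr (Or.inl ⟨rfl, hx⟩), huv.symm⟩
    · exact ⟨u, Or.inr (Or.inr ⟨rfl, hx⟩), huv⟩

lemma ncard_subdivide4Collapse_add_two_le [Finite V] {D' : Set (V ⊕ Fin 4)}
    (hD' : IsTotalDomSet (subdivide4 G u v) D') :
    (subdivide4Collapse u v D').ncard + 2 ≤ D'.ncard := by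
  obtain ⟨h02, h31, hu1, hv2⟩ := hD'.subdivide4_path_mem
  have hv := ncard_sdiff_lt_ncard_inter (X := {y | y = v ∧ inr 0 ∈ D'}) (D₀ := inl ⁻¹' D')
    (B := inr ⁻¹' D') (P := {0, 2}) (fun _ ↦ id) (by simp) (by simp) (by decide) h02 hv2
  have hu := ncard_sdiff_lt_ncard_inter (X := {y | y = u ∧ inr 3 ∈ D'}) (D₀ := inl ⁻¹' D')
    (B := inr ⁻¹' D') (P := {0, 2}ᶜ) (fun _ ↦ id) (by simp) (by simp) (by decide) h31 hu1
  have hsplit := ncard_inter_add_ncard_sdiff_eq_ncard (inr ⁻¹' D') {0, 2}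
  rw [sdiff_eq] at hsplit
  have hunion := ncard_union_le_ncard_add_ncard_sdiff_add_ncard_sdiff (inl ⁻¹' D')
    {y | y = v ∧ inr 0 ∈ D'} {y | y = u ∧ inr 3 ∈ D'}
  have hsum := ncard_preimage_inl_add_ncard_preimage_inr D'
  unfold subdivide4Collapse
  omega

end Subdivide4

lemma totalDomNum_le_sub {V W : Type*} [Fintype V] [Fintype W] {G : SimpleGraph V}
    {H : SimpleGraph W} {k : ℕ}
    (hle : ∀ D' : Set W, IsTotalDomSet H D' →
      ∃ D : Set V, IsTotalDomSet G D ∧ D.ncard ≤ D'.ncard - k)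
    (hex : ∀ D : Set V, IsTotalDomSet G D → ∃ D' : Set W, IsTotalDomSet H D') :
    totalDomNum G ≤ totalDomNum H - k := by
  by_cases hH : {n | ∃ D' : Set W, IsTotalDomSet H D' ∧ D'.ncard = n}.Nonempty
  · obtain ⟨D', hD', hcard⟩ := Nat.sInf_mem hH
    obtain ⟨D, hD, hDD'⟩ := hle D' hD'
    calc totalDomNum G ≤ D.ncard := Nat.sInf_le ⟨D, hD, rfl⟩
      _ ≤ D'.ncard - k := hDD'
      _ = totalDomNum H - k := by rw [totalDomNum, hcard]
  · have hG : {n | ∃ D : Set V, IsTotalDomSet G D ∧ D.ncard = n} = ∅ :=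
      eq_empty_of_forall_notMem fun _ ⟨D, hD, _⟩ ↦ hH (by
        obtain ⟨D', hD'⟩ := hex D hD
        exact ⟨_, D', hD', rfl⟩)
    simp [totalDomNum, hG]

/-- From any total dominating set `D'` of the 4-subdivision `H` of `G` along an
edge `uv` one can construct a total dominating set `D` of `G` with
`|D| ≤ |D'| − 2`; in particular `γ_t(G) ≤ γ_t(H) − 2`. -/
theorem stmt8 {V : Type*} [Fintype V] (G : SimpleGraph V) (u v : V)
    (huv : G.Adj u v) :
    (∀ D' : Set (V ⊕ Fin 4), IsTotalDomSet (subdivide4 G u v) D' →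
      ∃ D : Set V, IsTotalDomSet G D ∧ D.ncard ≤ D'.ncard - 2) ∧
    totalDomNum G ≤ totalDomNum (subdivide4 G u v) - 2 := by
  have hcollapse : ∀ D' : Set (V ⊕ Fin 4), IsTotalDomSet (subdivide4 G u v) D' →
      ∃ D : Set V, IsTotalDomSet G D ∧ D.ncard ≤ D'.ncard - 2 := fun D' hD' ↦
    ⟨_, isTotalDomSet_subdivide4Collapse huv hD',
      Nat.le_sub_of_add_le (ncard_subdivide4Collapse_add_two_le hD')⟩
  exact ⟨hcollapse, totalDomNum_le_sub hcollapse fun _ hD ↦ ⟨univ, hD.subdivide4_univ⟩⟩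
end

section
/- For every finite simple graph G with γ_t(G) ≥ 3 and every minimum total dominating set D of G: if D contains three vertices forming a (not necessarily induced) path P_3, then a single edge contraction suffices to decrease γ_t, i.e., ct_{γ_t}(G) = 1. -/
open SimpleGraph

/-!
Let `x, y, z ∈ D` with `x ~ y ~ z` and contract `xy` into `x`. Then `D - y` stays a total
dominating set: a vertex that only saw `y` now sees `x`, and `x` itself, which may have lost
its only neighbour `y`, still sees `z ≠ x`. Conversely, a total dominating set of `G / xy`
becomes one of `G` after adding a single vertex (`y` if `y` is then dominated, `x` otherwise),
so `γ_t(G / xy) = γ_t(G) - 1`. No contraction at all cannot do this, as `γ_t(G) ≠ 0`.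
-/


section TotalDomination

variable {V : Type*} {G : SimpleGraph V}

theorem totalDomNum_le_ncard [Fintype V] {D : Set V} (hD : IsTotalDomSet G D) :
    totalDomNum G ≤ D.ncard :=
  Nat.sInf_le ⟨D, hD, rfl⟩

theorem IsTotalDomSet.exists_ncard_eq_totalDomNum [Fintype V] {D : Set V}
    (hD : IsTotalDomSet G D) : ∃ D', IsTotalDomSet G D' ∧ D'.ncard = totalDomNum G :=
  Nat.sInf_mem (s := {n | ∃ D : Set V, IsTotalDomSet G D ∧ D.ncard = n}) ⟨_, D, hD, rfl⟩

variable {x y : V}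

theorem contractEdge_adj {a b : {v : V // v ≠ y}} :
    (contractEdge G x y).Adj a b ↔ (a : V) ≠ b ∧
      (G.Adj a b ∨ ((a : V) = x ∧ G.Adj y b) ∨ ((b : V) = x ∧ G.Adj y a)) := by
  simp only [contractEdge, fromRel_adj, ne_eq, Subtype.ext_iff]
  grind [G.adj_symm]

theorem ncard_preimage_val_ne {D : Set V} (hy : y ∈ D) :
    ((Subtype.val : {v : V // v ≠ y} → V) ⁻¹' D).ncard = D.ncard - 1 := by
  have hpre : (Subtype.val : {v : V // v ≠ y} → V) ⁻¹' D = Subtype.val ⁻¹' (D \ {y}) := by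
    ext ⟨v, hv⟩
    simp [hv]
  rw [hpre, Set.ncard_preimage_of_injective_subset_range Subtype.val_injective
    (fun v hv => ⟨⟨v, hv.2⟩, rfl⟩), Set.ncard_sdiff_singleton_of_mem hy]

theorem IsTotalDomSet.preimage_val_contractEdge {D : Set V} (hD : IsTotalDomSet G D) {z : V}
    (hx : x ∈ D) (hz : z ∈ D) (hxz : x ≠ z) (hxy : G.Adj x y) (hyz : G.Adj y z) :
    IsTotalDomSet (contractEdge G x y) (Subtype.val ⁻¹' D) := by
  intro v
  obtain ⟨u, hu, huv⟩ := hD v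
  by_cases huy : u = y
  · subst huy
    by_cases hvx : (v : V) = x
    · exact ⟨⟨z, hyz.ne'⟩, hz, contractEdge_adj.2
        ⟨fun h => hxz (hvx ▸ h.symm), Or.inr (Or.inr ⟨hvx, hyz⟩)⟩⟩
    · exact ⟨⟨x, hxy.ne⟩, hx, contractEdge_adj.2 ⟨Ne.symm hvx, Or.inr (Or.inl ⟨rfl, huv⟩)⟩⟩
  · exact ⟨⟨u, huy⟩, hu, contractEdge_adj.2 ⟨huv.ne, Or.inl huv⟩⟩

theorem IsTotalDomSet.exists_of_contractEdge (hxy : G.Adj x y)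
    {D : Set {v : V // v ≠ y}} (hD : IsTotalDomSet (contractEdge G x y) D) :
    ∃ D' : Set V, IsTotalDomSet G D' ∧ D'.ncard ≤ D.ncard + 1 := by
  set S : Set V := Subtype.val '' D
  have hS : S.ncard = D.ncard := Set.ncard_image_of_injective _ Subtype.val_injective
  by_cases hc : x ∈ S ∨ ∃ u ∈ S, G.Adj y u
  · refine ⟨insert y S, fun v => ?_, hS ▸ Set.ncard_insert_le _ _⟩
    by_cases hv : v = y
    · subst hv
      rcases hc with hxS | ⟨u, hu, hadj⟩
      · exact ⟨x, Set.mem_insert_of_mem _ hxS, hxy⟩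
      · exact ⟨u, Set.mem_insert_of_mem _ hu, hadj.symm⟩
    obtain ⟨u, hu, huv⟩ := hD ⟨v, hv⟩
    obtain ⟨-, h | ⟨-, hyv⟩ | ⟨hvx, -⟩⟩ := contractEdge_adj.1 huv
    · exact ⟨u, Set.mem_insert_of_mem _ ⟨u, hu, rfl⟩, h⟩
    · exact ⟨y, Set.mem_insert _ _, hyv⟩
    · exact ⟨y, Set.mem_insert _ _, (show v = x from hvx) ▸ hxy.symm⟩
  · push Not at hc
    obtain ⟨hxS, hyS⟩ := hc
    refine ⟨insert x S, fun v => ?_, hS ▸ Set.ncard_insert_le _ _⟩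
    by_cases hv : v = y
    · exact ⟨x, Set.mem_insert _ _, hv ▸ hxy⟩
    obtain ⟨u, hu, huv⟩ := hD ⟨v, hv⟩
    obtain ⟨-, h | ⟨hux, -⟩ | ⟨-, hyu⟩⟩ := contractEdge_adj.1 huv
    · exact ⟨u, Set.mem_insert_of_mem _ ⟨u, hu, rfl⟩, h⟩
    · exact absurd (hux ▸ ⟨u, hu, rfl⟩) hxS
    · exact absurd hyu (hyS u ⟨u, hu, rfl⟩)

theorem totalDomNum_contractEdge [Fintype V] [DecidableEq V] {D : Set V}
    (hD : IsTotalDomSet G D) (hmin : D.ncard = totalDomNum G) {z : V}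
    (hx : x ∈ D) (hy : y ∈ D) (hz : z ∈ D) (hxz : x ≠ z) (hxy : G.Adj x y) (hyz : G.Adj y z) :
    totalDomNum (contractEdge G x y) = totalDomNum G - 1 := by
  have hD' := hD.preimage_val_contractEdge hx hz hxz hxy hyz
  have hupper := totalDomNum_le_ncard hD'
  rw [ncard_preimage_val_ne hy] at hupper
  obtain ⟨E, hE, hEmin⟩ := hD'.exists_ncard_eq_totalDomNum
  obtain ⟨F, hF, hFcard⟩ := hE.exists_of_contractEdge hxy
  have hlower := totalDomNum_le_ncard hF
  omega

end TotalDomination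

def FGraph.contract (A : FGraph) [DecidableEq A.V] (x y : A.V) : FGraph :=
  ⟨{v : A.V // v ≠ y}, inferInstance, contractEdge A.G x y⟩

theorem FGraph.contract_of_adj {A : FGraph} [DecidableEq A.V] {x y : A.V}
    (hxy : A.G.Adj x y) : A.Contract (A.contract x y) :=
  ⟨x, y, hxy, Equiv.refl _, fun _ _ => Iff.rfl⟩

theorem ctTDNum_eq_one_of_contract {A B : FGraph} (hAB : A.Contract B)
    (hB : B.tdn = A.tdn - 1) (hA : A.tdn ≠ 0) : ctTDNum A = 1 := by
  have hone : 1 ∈ {n | ∃ C : FGraph, ContractStar n A C ∧ C.tdn = A.tdn - 1} :=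
    ⟨B, .step hAB (.refl B), hB⟩
  refine le_antisymm (Nat.sInf_le hone) (Nat.one_le_iff_ne_zero.2 fun h0 => ?_)
  rcases Nat.sInf_eq_zero.1 h0 with ⟨C, hC, hCt⟩ | hempty
  · cases hC
    omega
  · exact (hempty ▸ hone : 1 ∈ (∅ : Set ℕ))

/-- If `γ_t(G) ≥ 3` and a minimum total dominating set `D` of `G` contains a not
necessarily induced `P₃`, then `ct_{γ_t}(G) = 1`. -/
theorem stmt11 (A : FGraph) (h3 : 3 ≤ A.tdn) (D : Set A.V)
    (hD : IsTotalDomSet A.G D) (hmin : D.ncard = A.tdn)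
    (hP3 : ∃ x y z, x ∈ D ∧ y ∈ D ∧ z ∈ D ∧ x ≠ z ∧ A.G.Adj x y ∧ A.G.Adj y z) :
    ctTDNum A = 1 := by
  classical
  obtain ⟨x, y, z, hx, hy, hz, hxz, hxy, hyz⟩ := hP3
  exact ctTDNum_eq_one_of_contract (FGraph.contract_of_adj hxy)
    (totalDomNum_contractEdge hD hmin hx hy hz hxz hxy hyz) (by omega)
end

section
/- In the reduction graph G constructed from a 3-SAT instance Φ as follows — for each variable x a long paw G_x (triangle x, x̄, u_x plus path u_x–v_x–w_x), for each clause c a clause vertex adjacent to the literal vertices of its literals, and all clause vertices forming a clique — every semitotal dominating set D of G satisfies |D ∩ V(G_x)| ≥ 2 for every variable x. -/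
open SimpleGraph

/-- The reduction graph built from a 3-SAT instance with variables `X`, clauses
`C` and literal membership `lit` (`(x, true) ∈ lit c` means the positive literal
`x` occurs in `c`).  For a variable `x`, the gadget `G_x` has vertices
`(x,0) = x`, `(x,1) = x̄`, `(x,2) = uₓ`, `(x,3) = vₓ`, `(x,4) = wₓ` forming a long
paw; each clause vertex is adjacent to the literal vertices of its literals; the
clause vertices form a clique. -/
def satG {X C : Type*} (lit : C → Set (X × Bool)) :
    SimpleGraph ((X × Fin 5) ⊕ C) :=
  SimpleGraph.fromRel (fun a b =>
    match a, b with
    | Sum.inl (x, i), Sum.inl (y, j) => x = y ∧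
        ((i = 0 ∧ j = 1) ∨ (i = 0 ∧ j = 2) ∨ (i = 1 ∧ j = 2) ∨
         (i = 2 ∧ j = 3) ∨ (i = 3 ∧ j = 4))
    | Sum.inl (x, i), Sum.inr c =>
        (i = 0 ∧ (x, true) ∈ lit c) ∨ (i = 1 ∧ (x, false) ∈ lit c)
    | Sum.inr _, Sum.inr _ => True
    | _, _ => False)

/-- Whichever vertex of `D` dominates `w` lies in `S`, and so does its witness. -/
theorem IsSemitotalDomSet.two_le_ncard_inter {V : Type*} {G : SimpleGraph V} {D S : Set V}
    (hD : IsSemitotalDomSet G D) (hS : S.Finite) (w : V)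
    (hw : ∀ a, (a = w ∨ G.Adj a w) → a ∈ S ∧ ∀ y, WithinTwo G a y → y ∈ S) :
    2 ≤ (D ∩ S).ncard := by
  obtain ⟨a, haD, ha⟩ : ∃ a ∈ D, a = w ∨ G.Adj a w := by
    by_cases hwD : w ∈ D
    · exact ⟨w, hwD, .inl rfl⟩
    · obtain ⟨a, haD, haw⟩ := hD.1 w hwD
      exact ⟨a, haD, .inr haw⟩
  obtain ⟨haS, hball⟩ := hw a ha
  obtain ⟨y, hyD, hya, hay⟩ := hD.2 a haD
  exact (Set.one_lt_ncard (hS.inter_of_right D)).2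
    ⟨a, ⟨haD, haS⟩, y, ⟨hyD, hball y hay⟩, hya.symm⟩

section satG

variable {X C : Type*} (lit : C → Set (X × Bool))

/-- The vertex set of the long paw `G_x`. -/
def gadget (x : X) : Set ((X × Fin 5) ⊕ C) :=
  {w | ∃ i : Fin 5, w = Sum.inl (x, i)}

theorem gadget_finite (x : X) : (gadget (C := C) x).Finite :=
  (Set.finite_range fun i : Fin 5 => (Sum.inl (x, i) : (X × Fin 5) ⊕ C)).subset
    fun _ ⟨i, hi⟩ => ⟨i, hi.symm⟩

/-- `uₓ, vₓ, wₓ` have all their neighbours in `G_x`, and those of `vₓ, wₓ` are among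
`uₓ, vₓ, wₓ`. -/
theorem satG_adj_of_two_le {x : X} {i : Fin 5} (hi : 2 ≤ i) {b : (X × Fin 5) ⊕ C}
    (h : (satG lit).Adj (Sum.inl (x, i)) b) :
    ∃ j : Fin 5, b = Sum.inl (x, j) ∧ (3 ≤ i → (i : ℕ) ≤ j + 1) := by
  rcases b with ⟨y, j⟩ | c
  · simp only [satG, SimpleGraph.fromRel_adj] at h
    obtain ⟨-, h | h⟩ := h <;> obtain ⟨rfl, h⟩ := h <;> refine ⟨j, rfl, ?_⟩ <;>
      revert hi h <;> revert i j <;> decide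
  · simp only [satG, SimpleGraph.fromRel_adj, or_false] at h
    obtain ⟨-, ⟨rfl, -⟩ | ⟨rfl, -⟩⟩ := h <;> exact absurd hi (by decide)

theorem satG_withinTwo_mem_gadget {x : X} {i : Fin 5} (hi : 3 ≤ i) {y : (X × Fin 5) ⊕ C}
    (h : WithinTwo (satG lit) (Sum.inl (x, i)) y) : y ∈ gadget x := by
  have hi2 : 2 ≤ i := le_trans (by decide) hi
  rcases h with hy | ⟨z, hz, hzy⟩
  · obtain ⟨j, rfl, -⟩ := satG_adj_of_two_le lit hi2 hy
    exact ⟨j, rfl⟩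
  · obtain ⟨j, rfl, hj⟩ := satG_adj_of_two_le lit hi2 hz
    have hj2 : 2 ≤ j := by have := hj hi; rw [Fin.le_def] at hi ⊢; omega
    obtain ⟨k, rfl, -⟩ := satG_adj_of_two_le lit hj2 hzy
    exact ⟨k, rfl⟩

theorem satG_closedNeighborhood_four {x : X} {a : (X × Fin 5) ⊕ C}
    (ha : a = Sum.inl (x, 4) ∨ (satG lit).Adj a (Sum.inl (x, 4))) :
    ∃ i : Fin 5, 3 ≤ i ∧ a = Sum.inl (x, i) := by
  rcases ha with rfl | ha
  · exact ⟨4, by decide, rfl⟩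
  · obtain ⟨j, rfl, hj⟩ := satG_adj_of_two_le lit (by decide) ha.symm
    exact ⟨j, by have := hj (by decide); rw [Fin.le_def]; simpa using this, rfl⟩

end satG

theorem stmt13_general {X C : Type*} (lit : C → Set (X × Bool))
    (D : Set ((X × Fin 5) ⊕ C)) (hD : IsSemitotalDomSet (satG lit) D) (x : X) :
    2 ≤ (D ∩ {w | ∃ i : Fin 5, w = Sum.inl (x, i)}).ncard := by
  refine hD.two_le_ncard_inter (gadget_finite x) (Sum.inl (x, 4)) fun a ha => ?_
  obtain ⟨i, hi, rfl⟩ := satG_closedNeighborhood_four lit ha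
  exact ⟨⟨i, rfl⟩, fun y => satG_withinTwo_mem_gadget lit hi⟩

/-- In the 3-SAT reduction graph, every semitotal dominating set contains at
least two vertices of each variable gadget `G_x`. -/
theorem stmt13 {X C : Type*} [Fintype X] [Fintype C] (lit : C → Set (X × Bool))
    (D : Set ((X × Fin 5) ⊕ C)) (hD : IsSemitotalDomSet (satG lit) D) (x : X) :
    2 ≤ (D ∩ {w | ∃ i : Fin 5, w = Sum.inl (x, i)}).ncard :=
  stmt13_general lit D hD x
end

section
/- Let D be a minimum semitotal dominating set of a graph G such that D is independent and every vertex of D has exactly one witness. Let A ⊆ V(G), B = N(A), C = V(G) \ (A ∪ B), and suppose G[C] is a disjoint union of cliques. If no maximal clique K of G[C] contains two or more vertices of D, and D' = D \ (N[𝒦] ∪ w_D(D ∩ N[𝒦])) where 𝒦 is the union of closed neighbourhoods of the cliques of C, then |D'| ≤ 2|A|. -/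
open SimpleGraph

/-!
Remove from `D` the vertices of `D'`. The rest of `D` still dominates `C`, and the closed
neighbourhood of `C` together with its witnesses is closed under taking witnesses, while
`A` dominates every vertex outside `A ∪ C`. Adding `A` and one neighbour of each vertex of `A`
therefore yields a semitotal dominating set of size at most `|D| - |D'| + 2|A|`, so
minimality of `D` forces `|D'| ≤ 2|A|`.
-/

section

variable {V : Type*} (G : SimpleGraph V)

def IsWitnessed (S : Set V) : Prop :=
  ∀ x ∈ S, ∃ y ∈ S, y ≠ x ∧ WithinTwo G x y

def closedNbhdSet (C : Set V) : Set V :=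
  C ∪ {v | ∃ c ∈ C, G.Adj c v}

def witnessesOf (D N : Set V) : Set V :=
  {y ∈ D | ∃ x ∈ D, x ∈ N ∧ y ≠ x ∧ WithinTwo G x y}

variable {G}

theorem WithinTwo.symm {x y : V} (h : WithinTwo G x y) : WithinTwo G y x := by
  rcases h with h | ⟨z, hxz, hzy⟩
  · exact Or.inl h.symm
  · exact Or.inr ⟨z, hzy.symm, hxz.symm⟩

theorem IsWitnessed.union {S T : Set V} (hS : IsWitnessed G S) (hT : IsWitnessed G T) :
    IsWitnessed G (S ∪ T) := by
  rintro x (hx | hx)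
  · obtain ⟨y, hy, hne, hw⟩ := hS x hx
    exact ⟨y, Or.inl hy, hne, hw⟩
  · obtain ⟨y, hy, hne, hw⟩ := hT x hx
    exact ⟨y, Or.inr hy, hne, hw⟩

theorem isWitnessed_union_image {A : Set V} {f : V → V} (hf : ∀ a, G.Adj a (f a)) :
    IsWitnessed G (A ∪ f '' A) := by
  rintro x (hx | ⟨a, ha, rfl⟩)
  · exact ⟨f x, Or.inr ⟨x, hx, rfl⟩, (hf x).ne', Or.inl (hf x)⟩
  · exact ⟨a, Or.inl ha, (hf a).ne, Or.inl (hf a).symm⟩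

namespace IsSemitotalDomSet

variable {D : Set V}

theorem exists_adj (hD : IsSemitotalDomSet G D) (v : V) : ∃ u, G.Adj v u := by
  by_cases hv : v ∈ D
  · obtain ⟨y, -, -, hvy | ⟨z, hvz, -⟩⟩ := hD.2 v hv
    exacts [⟨y, hvy⟩, ⟨z, hvz⟩]
  · obtain ⟨u, -, huv⟩ := hD.1 v hv
    exact ⟨u, huv.symm⟩

theorem isWitnessed_inter_union_witnessesOf (hD : IsSemitotalDomSet G D) (N : Set V) :
    IsWitnessed G (D ∩ (N ∪ witnessesOf G D N)) := by
  rintro x ⟨hxD, hxN | ⟨-, z, hzD, hzN, hxz, hzx⟩⟩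
  · obtain ⟨y, hyD, hyx, hxy⟩ := hD.2 x hxD
    exact ⟨y, ⟨hyD, Or.inr ⟨hyD, x, hxD, hxN, hyx, hxy⟩⟩, hyx, hxy⟩
  · exact ⟨z, ⟨hzD, Or.inl hzN⟩, hxz.symm, hzx.symm⟩

theorem exists_adj_inter_union (hD : IsSemitotalDomSet G D) {A C X : Set V}
    (hC : ∀ v ∉ A, (∀ a ∈ A, ¬ G.Adj a v) → v ∈ C) (hX : closedNbhdSet G C ⊆ X) (v : V)
    (hv : v ∉ D ∩ X ∪ A) : ∃ u ∈ D ∩ X ∪ A, G.Adj u v := by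
  have hvA : v ∉ A := fun h => hv (Or.inr h)
  by_cases hvC : v ∈ C
  · have hvD : v ∉ D := fun h => hv (Or.inl ⟨h, hX (Or.inl hvC)⟩)
    obtain ⟨u, hu, huv⟩ := hD.1 v hvD
    exact ⟨u, Or.inl ⟨hu, hX (Or.inr ⟨v, hvC, huv.symm⟩)⟩, huv⟩
  · obtain ⟨a, ha, hav⟩ : ∃ a ∈ A, G.Adj a v := by
      by_contra! h
      exact hvC (hC v hvA h)
    exact ⟨a, Or.inr ha, hav⟩

theorem ncard_sdiff_closedNbhdSet_union_witnessesOf_le [Fintype V]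
    (hD : IsSemitotalDomSet G D) {A C : Set V}
    (hC : ∀ v ∉ A, (∀ a ∈ A, ¬ G.Adj a v) → v ∈ C) (hmin : D.ncard = semitotalDomNum G) :
    (D \ (closedNbhdSet G C ∪ witnessesOf G D (closedNbhdSet G C))).ncard ≤ 2 * A.ncard := by
  set X := closedNbhdSet G C
  set K := D ∩ (X ∪ witnessesOf G D X)
  choose f hf using hD.exists_adj
  have hS : IsSemitotalDomSet G (K ∪ A ∪ f '' A) := by
    refine ⟨fun v hv => ?_, ?_⟩
    · obtain ⟨u, hu, huv⟩ :=
        hD.exists_adj_inter_union hC Set.subset_union_left v (fun h => hv (Or.inl h))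
      exact ⟨u, Or.inl hu, huv⟩
    · rw [Set.union_assoc]
      exact (hD.isWitnessed_inter_union_witnessesOf X).union (isWitnessed_union_image hf)
  have hsplit : K.ncard + (D \ (X ∪ witnessesOf G D X)).ncard = D.ncard :=
    Set.ncard_inter_add_ncard_sdiff_eq_ncard _ _
  have hS_le : (K ∪ A ∪ f '' A).ncard ≤ K.ncard + A.ncard + A.ncard :=
    calc (K ∪ A ∪ f '' A).ncard ≤ (K ∪ A).ncard + (f '' A).ncard := Set.ncard_union_le _ _
      _ ≤ K.ncard + A.ncard + A.ncard :=
        add_le_add (Set.ncard_union_le _ _) Set.ncard_image_le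
  have hmin_le : semitotalDomNum G ≤ (K ∪ A ∪ f '' A).ncard := Nat.sInf_le ⟨_, hS, rfl⟩
  omega

end IsSemitotalDomSet

end

theorem stmt15_general {V : Type*} [Fintype V] (G : SimpleGraph V) (D A C : Set V)
    (hC : C = {v | v ∉ A ∧ ∀ a ∈ A, ¬ G.Adj a v})
    (hD : IsSemitotalDomSet G D) (hmin : D.ncard = semitotalDomNum G) :
    (D \ ((C ∪ {v | ∃ c ∈ C, G.Adj c v}) ∪
      {y ∈ D | ∃ x ∈ D, x ∈ C ∪ {v | ∃ c ∈ C, G.Adj c v} ∧ y ≠ x ∧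
        WithinTwo G x y})).ncard ≤ 2 * A.ncard :=
  hD.ncard_sdiff_closedNbhdSet_union_witnessesOf_le (fun _ hvA hv => hC ▸ ⟨hvA, hv⟩) hmin

/-- Let `D` be a minimum semitotal dominating set of `G` which is independent and
in which every vertex has exactly one witness.  Let `C` be the set of vertices
outside `A` with no neighbour in `A`, suppose `G[C]` is a disjoint union of
cliques and no maximal clique of `G[C]` contains two vertices of `D`.  Then the
set `D'` of vertices of `D` that are neither in the closed neighbourhood of `C`
nor witnesses of vertices of `D` in that closed neighbourhood satisfies
`|D'| ≤ 2|A|`. -/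
theorem stmt15 {V : Type*} [Fintype V] (G : SimpleGraph V) (D A C : Set V)
    (hC : C = {v | v ∉ A ∧ ∀ a ∈ A, ¬ G.Adj a v})
    (hD : IsSemitotalDomSet G D) (hmin : D.ncard = semitotalDomNum G)
    (hind : ∀ x ∈ D, ∀ y ∈ D, ¬ G.Adj x y)
    (hwit : ∀ x ∈ D, ∃! y, y ∈ D ∧ y ≠ x ∧ WithinTwo G x y)
    (hcliques : ∀ u ∈ C, ∀ v ∈ C, ∀ w ∈ C,
      G.Adj u v → G.Adj v w → u ≠ w → G.Adj u w)
    (hone : ∀ u ∈ D ∩ C, ∀ v ∈ D ∩ C, u ≠ v → ¬ G.Adj u v) :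
    (D \ ((C ∪ {v | ∃ c ∈ C, G.Adj c v}) ∪
      {y ∈ D | ∃ x ∈ D, x ∈ C ∪ {v | ∃ c ∈ C, G.Adj c v} ∧ y ≠ x ∧
        WithinTwo G x y})).ncard ≤ 2 * A.ncard :=
  stmt15_general G D A C hC hD hmin
end

section
/- In the reduction graph G constructed from a positive NAE-3-SAT instance, where for each variable x there is a gadget G_x on vertices F_x, T_x, u_x, w_x, v_x, r_x consisting of the 4-cycle F_x, T_x, v_x, u_x (edges F_xT_x, T_xv_x, v_xu_x, u_xF_x) together with a vertex w_x adjacent to u_x and v_x and a pendant vertex r_x adjacent to w_x, every semitotal dominating set D of G contains at least 2 vertices of each variable gadget G_x; consequently γ_{t2}(G) ≥ 2·(number of variables). -/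
open SimpleGraph

/-- The reduction graph built from a positive NAE-3-SAT instance with variables
`X`, clauses `C` and variable membership `vars`.  For a variable `x`, the gadget
`G_x` has vertices `(x,0) = Fₓ`, `(x,1) = Tₓ`, `(x,2) = uₓ`, `(x,3) = vₓ`,
`(x,4) = wₓ`, `(x,5) = rₓ` with the 4-cycle `Fₓ uₓ vₓ Tₓ`, `wₓ` adjacent to `uₓ`
and `vₓ`, and the pendant `rₓ` adjacent to `wₓ`.  The positive clause vertex
`(c, true)` is adjacent to `T_v` for `v ∈ vars c`, and the negated clause vertex
`(c, false)` to `F_v`. -/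
def naeG {X C : Type*} (vars : C → Set X) :
    SimpleGraph ((X × Fin 6) ⊕ (C × Bool)) :=
  SimpleGraph.fromRel (fun a b =>
    match a, b with
    | Sum.inl (x, i), Sum.inl (y, j) => x = y ∧
        ((i = 0 ∧ j = 2) ∨ (i = 2 ∧ j = 3) ∨ (i = 3 ∧ j = 1) ∨ (i = 1 ∧ j = 0) ∨
         (i = 4 ∧ j = 2) ∨ (i = 4 ∧ j = 3) ∨ (i = 4 ∧ j = 5))
    | Sum.inl (x, i), Sum.inr (c, s) =>
        x ∈ vars c ∧ ((s = true ∧ i = 1) ∨ (s = false ∧ i = 0))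
    | _, _ => False)

def gE (i j : Fin 6) : Prop :=
  (i = 0 ∧ j = 2) ∨ (i = 2 ∧ j = 3) ∨ (i = 3 ∧ j = 1) ∨ (i = 1 ∧ j = 0) ∨
  (i = 4 ∧ j = 2) ∨ (i = 4 ∧ j = 3) ∨ (i = 4 ∧ j = 5)

instance (i j : Fin 6) : Decidable (gE i j) := by unfold gE; infer_instance

lemma gE_irrefl : ∀ i : Fin 6, ¬ gE i i := by decide
lemma gE5 : ∀ j : Fin 6, gE 5 j ∨ gE j 5 → j = 4 := by decide
lemma gE4 : ∀ k : Fin 6, gE 4 k ∨ gE k 4 → k ≠ 0 ∧ k ≠ 1 := by decide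
lemma gE_ex : ∀ i : Fin 6, ∃ j, gE i j ∨ gE j i := by decide

lemma adj_inl {X C : Type*} (vars : C → Set X) (x : X) (i : Fin 6)
    (hi : i ≠ 0 ∧ i ≠ 1) (b : (X × Fin 6) ⊕ (C × Bool))
    (h : (naeG vars).Adj (Sum.inl (x, i)) b) :
    ∃ j : Fin 6, b = Sum.inl (x, j) ∧ (gE i j ∨ gE j i) ∧ j ≠ i := by
  rw [naeG, fromRel_adj] at h
  obtain ⟨hne, h | h⟩ := h
  · rcases b with ⟨y, j⟩ | ⟨c, s⟩
    · exact ⟨j, by rw [h.1], Or.inl h.2, fun e => hne (by rw [h.1, e])⟩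
    · simp at h; rcases h.2 with ⟨_, h⟩ | ⟨_, h⟩ <;> [exact absurd h hi.2; exact absurd h hi.1]
  · rcases b with ⟨y, j⟩ | ⟨c, s⟩
    · exact ⟨j, by rw [h.1], Or.inr h.2, fun e => hne (by rw [h.1, e])⟩
    · simp at h

lemma adj_of_gE {X C : Type*} (vars : C → Set X) (x : X) {i j : Fin 6} (h : gE i j) :
    (naeG vars).Adj (Sum.inl (x, i)) (Sum.inl (x, j)) := by
  rw [naeG, fromRel_adj]
  refine ⟨fun e => ?_, Or.inl ⟨rfl, h⟩⟩
  have : i = j := by simpa using e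
  subst this
  exact gE_irrefl i h


/-- In the NAE-3-SAT reduction graph, every semitotal dominating set contains at
least two vertices of each variable gadget; consequently
`γ_{t2}(G) ≥ 2 · |X|`. -/
theorem stmt17 {X C : Type*} [Fintype X] [Fintype C] (vars : C → Set X)
    (hvc : ∀ c : C, (vars c).Nonempty) :
    (∀ D : Set ((X × Fin 6) ⊕ (C × Bool)), IsSemitotalDomSet (naeG vars) D →
      ∀ x : X, 2 ≤ (D ∩ {w | ∃ i : Fin 6, w = Sum.inl (x, i)}).ncard) ∧
    2 * Fintype.card X ≤ semitotalDomNum (naeG vars) := by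
  classical
  have main : ∀ D : Set ((X × Fin 6) ⊕ (C × Bool)), IsSemitotalDomSet (naeG vars) D →
      ∀ x : X, 2 ≤ (D ∩ {w | ∃ i : Fin 6, w = Sum.inl (x, i)}).ncard := by
    intro D hD x
    set S : Set ((X × Fin 6) ⊕ (C × Bool)) := {w | ∃ i : Fin 6, w = Sum.inl (x, i)} with hS
    suffices h : ∃ a b, a ∈ D ∩ S ∧ b ∈ D ∩ S ∧ a ≠ b by
      obtain ⟨a, b, ha, hb, hab⟩ := h
      exact (Set.one_lt_ncard_iff (Set.toFinite _)).2 ⟨a, b, ha, hb, hab⟩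
    set r : (X × Fin 6) ⊕ (C × Bool) := Sum.inl (x, (5 : Fin 6)) with hr'
    by_cases hr : r ∈ D
    · obtain ⟨y, hy, hyne, hwt⟩ := hD.2 r hr
      have hyS : y ∈ S := by
        rcases hwt with h | ⟨z, h1, h2⟩
        · obtain ⟨j, hj, -, -⟩ := adj_inl vars x 5 (by decide) y h
          exact ⟨j, hj⟩
        · obtain ⟨j, hj, hjE, -⟩ := adj_inl vars x 5 (by decide) z h1
          have hj4 : j = 4 := gE5 j hjE
          subst hj4; subst hj
          obtain ⟨k, hk, -, -⟩ := adj_inl vars x 4 (by decide) y h2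
          exact ⟨k, hk⟩
      exact ⟨r, y, ⟨hr, 5, rfl⟩, ⟨hy, hyS⟩, fun e => hyne e.symm⟩
    · obtain ⟨u, hu, hadj⟩ := hD.1 r hr
      obtain ⟨j, hj, hjE, -⟩ := adj_inl vars x 5 (by decide) u hadj.symm
      have hj4 : j = 4 := gE5 j hjE
      subst hj4; subst hj
      obtain ⟨y, hy, hyne, hwt⟩ := hD.2 _ hu
      have hyS : y ∈ S := by
        rcases hwt with h | ⟨z, h1, h2⟩
        · obtain ⟨k, hk, -, -⟩ := adj_inl vars x 4 (by decide) y h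
          exact ⟨k, hk⟩
        · obtain ⟨k, hk, hkE, -⟩ := adj_inl vars x 4 (by decide) z h1
          have hk01 : k ≠ 0 ∧ k ≠ 1 := gE4 k hkE
          subst hk
          obtain ⟨m, hm, -, -⟩ := adj_inl vars x k hk01 y h2
          exact ⟨m, hm⟩
      exact ⟨_, y, ⟨hu, 4, rfl⟩, ⟨hy, hyS⟩, fun e => hyne e.symm⟩
  refine ⟨main, ?_⟩
  -- nonemptiness of the defining set: univ is a semitotal dominating set
  have huniv : IsSemitotalDomSet (naeG vars) (Set.univ) := by
    constructor
    · intro v hv; exact absurd (Set.mem_univ v) hv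
    · intro a _
      have : ∃ b, (naeG vars).Adj a b := by
        rcases a with ⟨y, i⟩ | ⟨c, s⟩
        · have : ∃ j, gE i j ∨ gE j i := gE_ex i
          obtain ⟨j, h | h⟩ := this
          · exact ⟨Sum.inl (y, j), adj_of_gE vars y h⟩
          · exact ⟨Sum.inl (y, j), (adj_of_gE vars y h).symm⟩
        · obtain ⟨v, hv⟩ := hvc c
          refine ⟨Sum.inl (v, if s then 1 else 0), SimpleGraph.Adj.symm ?_⟩
          rw [naeG, fromRel_adj]
          refine ⟨by simp, Or.inl ⟨hv, ?_⟩⟩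
          cases s <;> simp
      obtain ⟨b, hb⟩ := this
      exact ⟨b, Set.mem_univ b, hb.ne', Or.inl hb⟩
  have hne : {n | ∃ D : Set ((X × Fin 6) ⊕ (C × Bool)),
      IsSemitotalDomSet (naeG vars) D ∧ D.ncard = n}.Nonempty :=
    ⟨_, Set.univ, huniv, rfl⟩
  obtain ⟨D, hD, hcard⟩ := Nat.sInf_mem hne
  rw [semitotalDomNum, ← hcard]
  -- counting
  set F : X → Finset ((X × Fin 6) ⊕ (C × Bool)) :=
    fun x => (D ∩ {w | ∃ i : Fin 6, w = Sum.inl (x, i)}).toFinset with hF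
  have hsub : Finset.univ.biUnion F ⊆ D.toFinset := by
    intro a ha
    simp only [Finset.mem_biUnion, hF, Set.mem_toFinset] at ha ⊢
    obtain ⟨x, -, hx, -⟩ := ha
    exact hx
  have hdisj : ∀ x ∈ Finset.univ, ∀ y ∈ Finset.univ, x ≠ y → Disjoint (F x) (F y) := by
    intro x _ y _ hxy
    rw [Finset.disjoint_left]
    intro a ha hb
    simp only [hF, Set.mem_toFinset] at ha hb
    obtain ⟨-, i, rfl⟩ := ha
    obtain ⟨-, j, hj⟩ := hb
    simp only [Sum.inl.injEq, Prod.mk.injEq] at hj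
    exact hxy hj.1
  calc 2 * Fintype.card X = ∑ _x : X, 2 := by simp [mul_comm]
    _ ≤ ∑ x : X, (F x).card := by
        refine Finset.sum_le_sum fun x _ => ?_
        have := main D hD x
        rwa [Set.ncard_eq_toFinset_card'] at this
    _ = (Finset.univ.biUnion F).card := (Finset.card_biUnion hdisj).symm
    _ ≤ D.toFinset.card := Finset.card_le_card hsub
    _ = D.ncard := (Set.ncard_eq_toFinset_card' D).symm
end
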